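/- arXiv:1812.05251 — 9 statements merged into one kernel-verified Lean document; each statement's English description precedes it below -/
import Mathlib

section
/- Let Ψ ∈ L²(m) be real-valued and suppose there are constants C ≥ 0 and η > 0 such that |⟨Ψ∘φ_t, Ψ⟩ − m(Ψ)²| ≤ C e^{−ηt} for all t ≥ 0 (exponential decay of correlations). Then for every T ≥ 1 and every real M with 0 < M ≤ T, ‖λ_T Ψ − m(Ψ)‖² ≤ (2M‖Ψ‖² + (2C/η) e^{−ηM}) / T. -/
open MeasureTheory Filter Set

section Aux

variable {X : Type*} [MeasurableSpace X] {m : Measure X}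

lemma aux_integrable_mul [IsFiniteMeasure m] {f g : X → ℝ}
    (hf : MemLp f 2 m) (hg : MemLp g 2 m) :
    Integrable (fun x => f x * g x) m := by
  have hb : Integrable (fun x => (f x ^ 2 + g x ^ 2) / 2) m :=
    (hf.integrable_sq.add hg.integrable_sq).div_const 2
  refine hb.mono' (hf.1.mul hg.1) ?_
  filter_upwards with x
  rw [Real.norm_eq_abs, abs_mul]
  nlinarith [sq_nonneg (|f x| - |g x|), sq_abs (f x), sq_abs (g x),
    abs_nonneg (f x), abs_nonneg (g x)]

lemma aux_abs_integral_mul_le [IsFiniteMeasure m] {f g : X → ℝ}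
    (hf : MemLp f 2 m) (hg : MemLp g 2 m) :
    ∫ x, |f x * g x| ∂m ≤ ((∫ x, f x ^ 2 ∂m) + ∫ x, g x ^ 2 ∂m) / 2 := by
  have h1 : ∫ x, |f x * g x| ∂m ≤ ∫ x, (f x ^ 2 + g x ^ 2) / 2 ∂m := by
    refine integral_mono_of_nonneg (Eventually.of_forall fun x => abs_nonneg _)
      ((hf.integrable_sq.add hg.integrable_sq).div_const 2)
      (Eventually.of_forall fun x => ?_)
    simp only [abs_mul]
    nlinarith [sq_nonneg (|f x| - |g x|), sq_abs (f x), sq_abs (g x),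
      abs_nonneg (f x), abs_nonneg (g x)]
  calc ∫ x, |f x * g x| ∂m ≤ ∫ x, (f x ^ 2 + g x ^ 2) / 2 ∂m := h1
    _ = ((∫ x, f x ^ 2 ∂m) + ∫ x, g x ^ 2 ∂m) / 2 := by
        rw [integral_div, integral_add hf.integrable_sq hg.integrable_sq]

lemma aux_integral_comp {φ : X → X} (hφ : MeasurePreserving φ m m)
    {f : X → ℝ} (hf : AEStronglyMeasurable f m) :
    ∫ x, f (φ x) ∂m = ∫ x, f x ∂m := by
  have h : ∫ y, f y ∂(Measure.map φ m) = ∫ x, f (φ x) ∂m :=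
    integral_map hφ.measurable.aemeasurable (by rwa [hφ.map_eq])
  rw [hφ.map_eq] at h
  exact h.symm

lemma aux_integrable_comp_abs {f : ℝ → ℝ} (hmeas : Measurable f)
    (hf : IntegrableOn f (Ioi 0)) :
    Integrable (fun x => f |x|) := by
  have hIoi : IntegrableOn (fun x => f |x|) (Ioi 0) := by
    refine hf.congr_fun (fun x hx => ?_) measurableSet_Ioi
    rw [abs_of_pos hx]
  have hIic : IntegrableOn (fun x => f |x|) (Iic 0) := by
    rw [← Measure.map_neg_eq_self (volume : Measure ℝ)]
    have hemb : MeasurableEmbedding fun x : ℝ => -x :=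
      (Homeomorph.neg ℝ).measurableEmbedding
    rw [hemb.integrableOn_map_iff]
    simp_rw [Function.comp_def, abs_neg, neg_preimage, neg_Iic, neg_zero]
    exact (integrableOn_Ici_iff_integrableOn_Ioi).mpr hIoi
  have hcover : Iic (0:ℝ) ∪ Ioi 0 = univ := Iic_union_Ioi
  rw [← integrableOn_univ, ← hcover]
  exact hIic.union hIoi

lemma aux_exp_tail {η : ℝ} (hη : 0 < η) (M : ℝ) :
    ∫ u in Ioi M, Real.exp (-η * u) = Real.exp (-η * M) / η := by
  have hderiv : ∀ x ∈ Ici M,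
      HasDerivAt (fun u : ℝ => -Real.exp (-η * u) / η) (Real.exp (-η * x)) x := by
    intro x _
    have h1 : HasDerivAt (fun u : ℝ => -η * u) (-η) x := by
      simpa using (hasDerivAt_id x).const_mul (-η)
    have h2 := (h1.exp).neg.div_const η
    refine h2.congr_deriv ?_
    field_simp
  have htend : Tendsto (fun u : ℝ => -Real.exp (-η * u) / η) atTop (nhds 0) := by
    have h1 : Tendsto (fun u : ℝ => -η * u) atTop atBot :=
      tendsto_id.const_mul_atTop_of_neg (neg_neg_iff_pos.2 hη)
    have h2 : Tendsto (fun u : ℝ => Real.exp (-η * u)) atTop (nhds 0) :=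
      Real.tendsto_exp_atBot.comp h1
    simpa using (h2.neg).div_const η
  have := integral_Ioi_of_hasDerivAt_of_tendsto' hderiv
    (exp_neg_integrableOn_Ioi M hη) htend
  rw [this]
  field_simp
  ring

end Aux


theorem aux_main {X : Type*} [MeasurableSpace X] (m : Measure X) [IsProbabilityMeasure m]
    (φ : ℝ → X → X)
    (hφ0 : φ 0 = id)
    (hφadd : ∀ s t : ℝ, φ (s + t) = φ s ∘ φ t)
    (hφmeas : Measurable fun p : ℝ × X => φ p.1 p.2)
    (hφpres : ∀ t : ℝ, MeasurePreserving (φ t) m m)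
    (g : X → ℝ) (hgm : Measurable g) (hg : MemLp g 2 m)
    (C η : ℝ) (hC : 0 ≤ C) (hη : 0 < η)
    (hdecay : ∀ t : ℝ, 0 ≤ t →
      |(∫ x, g (φ t x) * g x ∂m) - (∫ x, g x ∂m) ^ 2| ≤ C * Real.exp (-η * t))
    (T : ℝ) (hT : 1 ≤ T) (M : ℝ) (hM : 0 < M) (hMT : M ≤ T) :
    ∫ x, ((1 / T) * (∫ t in (0:ℝ)..T, g (φ t x)) - ∫ y, g y ∂m) ^ 2 ∂m
      ≤ (2 * M * (∫ x, (g x) ^ 2 ∂m) + (2 * C / η) * Real.exp (-η * M)) / T := by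
  have hT0 : (0:ℝ) < T := lt_of_lt_of_le one_pos hT
  set v : ℝ := ∫ y, g y ∂m with hv
  set h : X → ℝ := fun x => g x - v with hh
  have hhm : Measurable h := hgm.sub measurable_const
  have hhL2 : MemLp h 2 m := hg.sub (memLp_const v)
  have hgInt : Integrable g m := hg.integrable one_le_two
  have hg2 : Integrable (fun x => g x ^ 2) m := hg.integrable_sq
  have hh2 : Integrable (fun x => h x ^ 2) m := hhL2.integrable_sq
  set I2 : ℝ := ∫ x, h x ^ 2 ∂m with hI2
  have hI2nn : 0 ≤ I2 := integral_nonneg fun x => sq_nonneg _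
  have hI2le : I2 ≤ ∫ x, g x ^ 2 ∂m := by
    have e : ∀ x, h x ^ 2 = g x ^ 2 - (2 * v * g x - v * v) := by
      intro x; simp only [hh]; ring
    have hint : Integrable (fun x => 2 * v * g x - v * v) m :=
      (hgInt.const_mul _).sub (integrable_const _)
    rw [hI2]
    simp_rw [e]
    rw [integral_sub hg2 hint, integral_sub (hgInt.const_mul _) (integrable_const _),
      integral_const, integral_const_mul]
    simp only [measure_univ, ENNReal.toReal_one, probReal_univ, smul_eq_mul, one_mul, ← hv]
    nlinarith [sq_nonneg v]
  have φmeas : ∀ t : ℝ, Measurable (φ t) := fun t =>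
    hφmeas.comp (measurable_const.prodMk measurable_id)
  have hcomp : ∀ u : ℝ, MemLp (fun x => h (φ u x)) 2 m := fun u =>
    hhL2.comp_measurePreserving (hφpres u)
  have hinv2 : ∀ u : ℝ, ∫ x, h (φ u x) ^ 2 ∂m = I2 := fun u =>
    aux_integral_comp (hφpres u) ((hhm.pow_const 2).aestronglyMeasurable)
  set ρ : ℝ → ℝ := fun u => ∫ x, h (φ u x) * h x ∂m with hρ
  have corr : ∀ t s : ℝ, (∫ x, h (φ t x) * h (φ s x) ∂m) = ρ (t - s) := by
    intro t s
    have key : ∀ x, h (φ t x) = h (φ (t - s) (φ s x)) := by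
      intro x
      have h1 : φ (t - s) (φ s x) = φ (t - s + s) x := by rw [hφadd]; rfl
      rw [h1, sub_add_cancel]
    calc (∫ x, h (φ t x) * h (φ s x) ∂m)
        = ∫ x, (fun y => h (φ (t - s) y) * h y) (φ s x) ∂m := by
          refine integral_congr_ae (Eventually.of_forall fun x => ?_)
          simp only []
          rw [key x]
      _ = ∫ y, h (φ (t - s) y) * h y ∂m :=
          aux_integral_comp (hφpres s) (((hhm.comp (φmeas _)).mul hhm).aestronglyMeasurable)
      _ = ρ (t - s) := rfl
  have bound1 : ∀ u : ℝ, |ρ u| ≤ I2 := by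
    intro u
    have h1 : |ρ u| ≤ ∫ x, |h (φ u x) * h x| ∂m :=
      norm_integral_le_integral_norm (μ := m) (fun x => h (φ u x) * h x)
    have h2 := aux_abs_integral_mul_le (hcomp u) hhL2
    rw [hinv2 u] at h2
    calc |ρ u| ≤ ∫ x, |h (φ u x) * h x| ∂m := h1
      _ ≤ (I2 + I2) / 2 := h2
      _ = I2 := by ring
  have expand : ∀ u : ℝ, ρ u = (∫ x, g (φ u x) * g x ∂m) - v ^ 2 := by
    intro u
    have hgφ : MemLp (fun x => g (φ u x)) 2 m := hg.comp_measurePreserving (hφpres u)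
    have hgφInt : Integrable (fun x => g (φ u x)) m := hgφ.integrable one_le_two
    have hinv1 : (∫ x, g (φ u x) ∂m) = v := aux_integral_comp (hφpres u) hg.1
    have e : ∀ x, h (φ u x) * h x
        = g (φ u x) * g x - (v * g (φ u x) + (v * g x - v * v)) := by
      intro x; simp only [hh]; ring
    have hA : Integrable (fun x => g (φ u x) * g x) m := aux_integrable_mul hgφ hg
    have hB1 : Integrable (fun x => v * g x - v * v) m :=
      (hgInt.const_mul v).sub (integrable_const _)
    have hB : Integrable (fun x => v * g (φ u x) + (v * g x - v * v)) m :=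
      (hgφInt.const_mul v).add hB1
    have : ρ u = ∫ x, (g (φ u x) * g x - (v * g (φ u x) + (v * g x - v * v))) ∂m := by
      rw [hρ]
      exact integral_congr_ae (Eventually.of_forall fun x => e x)
    rw [this, integral_sub hA hB, integral_add (hgφInt.const_mul v) hB1,
      integral_sub (hgInt.const_mul v) (integrable_const _), integral_const_mul,
      integral_const_mul, hinv1, integral_const, ← hv]
    simp only [measure_univ, ENNReal.toReal_one, probReal_univ, smul_eq_mul, one_mul]
    ring
  have bound2 : ∀ u : ℝ, 0 ≤ u → |ρ u| ≤ C * Real.exp (-η * u) := by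
    intro u hu
    rw [expand u]
    exact hdecay u hu
  have ρsym : ∀ u : ℝ, ρ (-u) = ρ u := by
    intro u
    have h1 : (∫ x, h (φ 0 x) * h (φ u x) ∂m) = ρ (0 - u) := corr 0 u
    rw [hφ0] at h1
    simp only [id_eq, zero_sub] at h1
    rw [← h1]
    exact (integral_congr_ae (Eventually.of_forall fun x => mul_comm (h x) (h (φ u x)))).trans rfl
  have bound2' : ∀ u : ℝ, |ρ u| ≤ C * Real.exp (-η * |u|) := by
    intro u
    rcases le_or_gt 0 u with hu | hu
    · rw [abs_of_nonneg hu]; exact bound2 u hu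
    · rw [abs_of_neg hu, ← ρsym u]
      exact bound2 (-u) (by linarith)
  -- the time measure
  set μJ : Measure ℝ := volume.restrict (Ioc (0:ℝ) T) with hμJ
  have hJfin : μJ univ = ENNReal.ofReal T := by
    rw [hμJ, Measure.restrict_apply_univ, Real.volume_Ioc, sub_zero]
  haveI : IsFiniteMeasure μJ := ⟨by rw [hJfin]; exact ENNReal.ofReal_lt_top⟩
  have hμJreal : (μJ univ).toReal = T := by rw [hJfin, ENNReal.toReal_ofReal hT0.le]
  -- integrability of the kernel on the product
  have hKer_meas : Measurable (fun q : (ℝ × ℝ) × X => h (φ q.1.1 q.2) * h (φ q.1.2 q.2)) := by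
    have m1 : Measurable (fun q : (ℝ × ℝ) × X => φ q.1.1 q.2) :=
      hφmeas.comp ((measurable_fst.fst).prodMk measurable_snd)
    have m2 : Measurable (fun q : (ℝ × ℝ) × X => φ q.1.2 q.2) :=
      hφmeas.comp ((measurable_fst.snd).prodMk measurable_snd)
    exact (hhm.comp m1).mul (hhm.comp m2)
  have hKer_asm : AEStronglyMeasurable
      (fun q : (ℝ × ℝ) × X => h (φ q.1.1 q.2) * h (φ q.1.2 q.2)) ((μJ.prod μJ).prod m) :=
    hKer_meas.aestronglyMeasurable
  have hK : Integrable (fun q : (ℝ × ℝ) × X => h (φ q.1.1 q.2) * h (φ q.1.2 q.2))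
      ((μJ.prod μJ).prod m) := by
    rw [integrable_prod_iff hKer_asm]
    constructor
    · exact Eventually.of_forall fun p => aux_integrable_mul (hcomp p.1) (hcomp p.2)
    · have hb : ∀ p : ℝ × ℝ, ‖∫ x, ‖h (φ p.1 x) * h (φ p.2 x)‖ ∂m‖ ≤ I2 := by
        intro p
        have hnn : 0 ≤ ∫ x, ‖h (φ p.1 x) * h (φ p.2 x)‖ ∂m :=
          integral_nonneg fun x => norm_nonneg _
        rw [Real.norm_eq_abs, abs_of_nonneg hnn]
        have h3 := aux_abs_integral_mul_le (hcomp p.1) (hcomp p.2)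
        rw [hinv2 p.1, hinv2 p.2] at h3
        calc ∫ x, ‖h (φ p.1 x) * h (φ p.2 x)‖ ∂m
            = ∫ x, |h (φ p.1 x) * h (φ p.2 x)| ∂m := by simp only [Real.norm_eq_abs]
          _ ≤ (I2 + I2) / 2 := h3
          _ ≤ I2 := by linarith
      exact (integrable_const I2).mono' (hKer_asm.norm.integral_prod_right')
        (Eventually.of_forall hb)
  -- pointwise expansion of the square
  have hpt : ∀ x : X, (∫ t, h (φ t x) ∂μJ) ^ 2
      = ∫ p, h (φ p.1 x) * h (φ p.2 x) ∂(μJ.prod μJ) := by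
    intro x
    rw [sq]
    exact (integral_prod_mul (fun t => h (φ t x)) (fun t => h (φ t x))).symm
  have hswap : (∫ x, (∫ p, h (φ p.1 x) * h (φ p.2 x) ∂(μJ.prod μJ)) ∂m)
      = ∫ p, (∫ x, h (φ p.1 x) * h (φ p.2 x) ∂m) ∂(μJ.prod μJ) :=
    (integral_integral_swap (f := fun (p : ℝ × ℝ) (x : X) => h (φ p.1 x) * h (φ p.2 x)) hK).symm
  have hcorr_all : (∫ p, (∫ x, h (φ p.1 x) * h (φ p.2 x) ∂m) ∂(μJ.prod μJ))
      = ∫ p, ρ (p.1 - p.2) ∂(μJ.prod μJ) :=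
    integral_congr_ae (Eventually.of_forall fun p => corr p.1 p.2)
  -- the pointwise bound function
  set β : ℝ × ℝ → ℝ := fun p =>
    (if |p.1 - p.2| ≤ M then I2 else 0)
      + (if M < |p.1 - p.2| then C * Real.exp (-η * |p.1 - p.2|) else 0) with hβ
  have hβnn : ∀ p, 0 ≤ β p := by
    intro p
    apply add_nonneg
    · split <;> [exact hI2nn; exact le_rfl]
    · split <;> [positivity; exact le_rfl]
  have hρβ : ∀ p : ℝ × ℝ, |ρ (p.1 - p.2)| ≤ β p := by
    intro p
    rcases le_or_gt (|p.1 - p.2|) M with hc | hc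
    · calc |ρ (p.1 - p.2)| ≤ I2 := bound1 _
        _ ≤ β p := by rw [hβ]; simp only [if_pos hc, if_neg (not_lt.mpr hc)]; simp
    · calc |ρ (p.1 - p.2)| ≤ C * Real.exp (-η * |p.1 - p.2|) := bound2' _
        _ ≤ β p := by rw [hβ]; simp only [if_neg (not_le.mpr hc), if_pos hc]; simp
  have hβmeas : Measurable β := by
    have hd : Measurable fun p : ℝ × ℝ => |p.1 - p.2| := (measurable_fst.sub measurable_snd).abs
    apply Measurable.add
    · exact Measurable.ite (measurableSet_le hd measurable_const)
        measurable_const measurable_const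
    · exact Measurable.ite (measurableSet_lt measurable_const hd)
        (((hd.const_mul (-η)).exp).const_mul C) measurable_const
  have hβbdd : ∀ p, ‖β p‖ ≤ I2 + C := by
    intro p
    rw [Real.norm_eq_abs, abs_of_nonneg (hβnn p), hβ]
    simp only []
    apply add_le_add
    · split
      · exact le_rfl
      · exact hI2nn
    · split
      · have hexp : Real.exp (-η * |p.1 - p.2|) ≤ 1 := by
          rw [Real.exp_le_one_iff]
          have h0 : 0 ≤ |p.1 - p.2| := abs_nonneg _
          nlinarith
        calc C * Real.exp (-η * |p.1 - p.2|) ≤ C * 1 :=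
            mul_le_mul_of_nonneg_left hexp hC
          _ = C := mul_one C
      · exact hC
  have hβint : Integrable β (μJ.prod μJ) :=
    (integrable_const (I2 + C)).mono' hβmeas.aestronglyMeasurable
      (Eventually.of_forall hβbdd)
  have hstep : (∫ p, ρ (p.1 - p.2) ∂(μJ.prod μJ)) ≤ ∫ p, β p ∂(μJ.prod μJ) := by
    have habs : |∫ p, ρ (p.1 - p.2) ∂(μJ.prod μJ)| ≤ ∫ p, |ρ (p.1 - p.2)| ∂(μJ.prod μJ) :=
      norm_integral_le_integral_norm (μ := μJ.prod μJ) (fun p : ℝ × ℝ => ρ (p.1 - p.2))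
    have hmono : (∫ p, |ρ (p.1 - p.2)| ∂(μJ.prod μJ)) ≤ ∫ p, β p ∂(μJ.prod μJ) :=
      integral_mono_of_nonneg (Eventually.of_forall fun p => abs_nonneg _) hβint
        (Eventually.of_forall hρβ)
    exact le_trans (le_abs_self _) (le_trans habs hmono)
  have hβsplit : (∫ p, β p ∂(μJ.prod μJ)) = ∫ a, (∫ b, β (a, b) ∂μJ) ∂μJ :=
    integral_prod β hβint
  have hinner : ∀ a : ℝ, (∫ b, β (a, b) ∂μJ)
      ≤ 2 * M * I2 + (2 * C / η) * Real.exp (-η * M) := by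
    intro a
    set F : ℝ → ℝ := fun u => if M < u then C * Real.exp (-η * u) else 0 with hF
    have hFmeas : Measurable F :=
      Measurable.ite (measurableSet_lt measurable_const measurable_id)
        (((measurable_id.const_mul (-η)).exp).const_mul C) measurable_const
    have hFnn : ∀ u, 0 ≤ F u := by
      intro u; rw [hF]; simp only []; split
      · positivity
      · exact le_rfl
    have hFIoi : IntegrableOn F (Ioi 0) := by
      refine ((exp_neg_integrableOn_Ioi 0 hη).const_mul C).mono'
        hFmeas.aestronglyMeasurable (Eventually.of_forall fun u => ?_)
      rw [Real.norm_eq_abs, abs_of_nonneg (hFnn u), hF]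
      simp only []
      split
      · exact le_rfl
      · positivity
    have hFint : Integrable (fun x : ℝ => F |x|) := aux_integrable_comp_abs hFmeas hFIoi
    have hGb : ∀ b : ℝ, (if M < |a - b| then C * Real.exp (-η * |a - b|) else 0) = F |b - a| := by
      intro b; rw [hF, abs_sub_comm]
    have hfin1 : Integrable (fun b => if |a - b| ≤ M then I2 else 0) μJ := by
      have : Measurable (fun b : ℝ => if |a - b| ≤ M then I2 else 0) :=
        Measurable.ite (measurableSet_le ((measurable_const.sub measurable_id).abs)
          measurable_const) measurable_const measurable_const
      refine (integrable_const (|I2|)).mono' this.aestronglyMeasurable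
        (Eventually.of_forall fun b => ?_)
      rw [Real.norm_eq_abs]
      split
      · exact le_rfl
      · simp [abs_nonneg]
    have hfin2 : Integrable (fun b => if M < |a - b| then C * Real.exp (-η * |a - b|) else 0) μJ := by
      have h1 : Integrable (fun b : ℝ => F |b - a|) volume :=
        Integrable.comp_sub_right hFint a
      have h2 : Integrable (fun b : ℝ => F |b - a|) μJ := h1.restrict
      exact h2.congr (Eventually.of_forall fun b => (hGb b).symm)
    have hsum : (∫ b, β (a, b) ∂μJ)
        = (∫ b, (if |a - b| ≤ M then I2 else 0) ∂μJ)
          + ∫ b, (if M < |a - b| then C * Real.exp (-η * |a - b|) else 0) ∂μJ := by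
      rw [← integral_add hfin1 hfin2]
    have hpiece1 : (∫ b, (if |a - b| ≤ M then I2 else 0) ∂μJ) ≤ 2 * M * I2 := by
      have hset : (fun b => if |a - b| ≤ M then I2 else 0)
          = (Icc (a - M) (a + M)).indicator (fun _ => I2) := by
        funext b
        rw [Set.indicator_apply]
        by_cases hb : |a - b| ≤ M
        · rw [if_pos hb, if_pos]
          rw [abs_le] at hb
          exact ⟨by linarith [hb.2], by linarith [hb.1]⟩
        · rw [if_neg hb, if_neg]
          intro hmem
          apply hb
          rw [abs_le]
          exact ⟨by linarith [hmem.2], by linarith [hmem.1]⟩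
      rw [hset, integral_indicator_const I2 measurableSet_Icc, smul_eq_mul]
      have hmeasle : (μJ (Icc (a - M) (a + M))).toReal ≤ 2 * M := by
        have h1 : μJ (Icc (a - M) (a + M)) ≤ volume (Icc (a - M) (a + M)) :=
          Measure.restrict_apply_le _ _
        have h2 : volume (Icc (a - M) (a + M)) = ENNReal.ofReal (2 * M) := by
          rw [Real.volume_Icc]; ring_nf
        have h3 : (μJ (Icc (a - M) (a + M))).toReal ≤ (volume (Icc (a - M) (a + M))).toReal := by
          apply ENNReal.toReal_mono _ h1
          rw [h2]; exact ENNReal.ofReal_ne_top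
        rw [h2, ENNReal.toReal_ofReal (by linarith)] at h3
        exact h3
      exact mul_le_mul_of_nonneg_right hmeasle hI2nn
    have hpiece2 : (∫ b, (if M < |a - b| then C * Real.exp (-η * |a - b|) else 0) ∂μJ)
        ≤ (2 * C / η) * Real.exp (-η * M) := by
      have hFind : F = (Ioi M).indicator (fun u => C * Real.exp (-η * u)) := by
        funext u
        rw [Set.indicator_apply]
        simp only [hF, mem_Ioi]
      calc (∫ b, (if M < |a - b| then C * Real.exp (-η * |a - b|) else 0) ∂μJ)
          = ∫ b, F |b - a| ∂μJ :=
            integral_congr_ae (Eventually.of_forall fun b => hGb b)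
        _ ≤ ∫ b, F |b - a| := by
            rw [hμJ]
            exact setIntegral_le_integral (Integrable.comp_sub_right hFint a)
              (Eventually.of_forall fun b => hFnn _)
        _ = ∫ x : ℝ, F |x| := integral_sub_right_eq_self (fun x => F |x|) a
        _ = 2 * ∫ x in Ioi (0:ℝ), F x := integral_comp_abs
        _ = 2 * ∫ x in Ioi M, C * Real.exp (-η * x) := by
            congr 1
            rw [hFind, integral_indicator measurableSet_Ioi,
              Measure.restrict_restrict measurableSet_Ioi, Ioi_inter_Ioi,
              max_eq_left hM.le]
        _ = 2 * (C * (Real.exp (-η * M) / η)) := by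
            rw [integral_const_mul, aux_exp_tail hη M]
        _ = (2 * C / η) * Real.exp (-η * M) := by
            field_simp
      -- done
    calc (∫ b, β (a, b) ∂μJ) = _ + _ := hsum
      _ ≤ 2 * M * I2 + (2 * C / η) * Real.exp (-η * M) := add_le_add hpiece1 hpiece2
  have houter : (∫ a, (∫ b, β (a, b) ∂μJ) ∂μJ)
      ≤ T * (2 * M * I2 + (2 * C / η) * Real.exp (-η * M)) := by
    calc (∫ a, (∫ b, β (a, b) ∂μJ) ∂μJ)
        ≤ ∫ _a, (2 * M * I2 + (2 * C / η) * Real.exp (-η * M)) ∂μJ := by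
          exact integral_mono_of_nonneg
            (Eventually.of_forall fun a => integral_nonneg fun b => hβnn _)
            (integrable_const _) (Eventually.of_forall fun a => hinner a)
      _ = T * (2 * M * I2 + (2 * C / η) * Real.exp (-η * M)) := by
          rw [integral_const, measureReal_def, hμJreal, smul_eq_mul]
  -- reduce the Birkhoff average to the centered function
  have hgIntProd : Integrable (Function.uncurry fun (t : ℝ) (x : X) => g (φ t x))
      (μJ.prod m) := by
    have hasm : AEStronglyMeasurable (Function.uncurry fun (t : ℝ) (x : X) => g (φ t x))
        (μJ.prod m) := (hgm.comp hφmeas).aestronglyMeasurable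
    rw [integrable_prod_iff hasm]
    constructor
    · exact Eventually.of_forall fun t =>
        (hg.comp_measurePreserving (hφpres t)).integrable one_le_two
    · have heq : (fun t : ℝ => ∫ x, ‖Function.uncurry (fun (t : ℝ) (x : X) => g (φ t x)) (t, x)‖ ∂m)
          = fun _ : ℝ => ∫ x, |g x| ∂m := by
        funext t
        simp only [Function.uncurry_apply_pair, Real.norm_eq_abs]
        exact aux_integral_comp (hφpres t) (hgm.abs.aestronglyMeasurable)
      rw [heq]
      exact integrable_const _
  have hInt_ae : ∀ᵐ x ∂m, Integrable (fun t => g (φ t x)) μJ := by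
    filter_upwards [hgIntProd.prod_left_ae] with x hx
    exact hx
  have hae : ∀ᵐ x ∂m, ((1 / T) * (∫ t in (0:ℝ)..T, g (φ t x)) - v) ^ 2
      = (1 / T) ^ 2 * (∫ t, h (φ t x) ∂μJ) ^ 2 := by
    filter_upwards [hInt_ae] with x hx
    have e1 : (∫ t in (0:ℝ)..T, g (φ t x)) = ∫ t, g (φ t x) ∂μJ := by
      rw [intervalIntegral.integral_of_le hT0.le, hμJ]
    have e2 : (∫ t, h (φ t x) ∂μJ) = (∫ t, g (φ t x) ∂μJ) - T * v := by
      have : (∫ t, h (φ t x) ∂μJ) = ∫ t, (g (φ t x) - v) ∂μJ := by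
        exact integral_congr_ae (Eventually.of_forall fun t => by rw [hh])
      rw [this, integral_sub hx (integrable_const v), integral_const, measureReal_def, hμJreal, smul_eq_mul]
    have e3 : (1 / T) * (∫ t, g (φ t x) ∂μJ) - v
        = (1 / T) * ((∫ t, g (φ t x) ∂μJ) - T * v) := by
      field_simp
    rw [e1, e3, e2.symm, mul_pow]
  calc ∫ x, ((1 / T) * (∫ t in (0:ℝ)..T, g (φ t x)) - v) ^ 2 ∂m
      = ∫ x, (1 / T) ^ 2 * (∫ t, h (φ t x) ∂μJ) ^ 2 ∂m := integral_congr_ae hae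
    _ = (1 / T) ^ 2 * ∫ x, (∫ t, h (φ t x) ∂μJ) ^ 2 ∂m := integral_const_mul _ _
    _ = (1 / T) ^ 2 * ∫ p, ρ (p.1 - p.2) ∂(μJ.prod μJ) := by
        congr 1
        calc ∫ x, (∫ t, h (φ t x) ∂μJ) ^ 2 ∂m
            = ∫ x, (∫ p, h (φ p.1 x) * h (φ p.2 x) ∂(μJ.prod μJ)) ∂m :=
              integral_congr_ae (Eventually.of_forall fun x => hpt x)
          _ = ∫ p, (∫ x, h (φ p.1 x) * h (φ p.2 x) ∂m) ∂(μJ.prod μJ) := hswap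
          _ = ∫ p, ρ (p.1 - p.2) ∂(μJ.prod μJ) := hcorr_all
    _ ≤ (1 / T) ^ 2 * (T * (2 * M * I2 + (2 * C / η) * Real.exp (-η * M))) := by
        apply mul_le_mul_of_nonneg_left _ (by positivity)
        exact le_trans hstep (le_trans (le_of_eq hβsplit) houter)
    _ = (2 * M * I2 + (2 * C / η) * Real.exp (-η * M)) / T := by
        field_simp
    _ ≤ (2 * M * (∫ x, (g x) ^ 2 ∂m) + (2 * C / η) * Real.exp (-η * M)) / T := by
        gcongr


/-- If the correlations of `Ψ ∈ L²(m)` along a measure-preserving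
flow decay exponentially, `|⟨Ψ∘φ_t, Ψ⟩ − m(Ψ)²| ≤ C e^{−ηt}` for `t ≥ 0`, then for
every `T ≥ 1` and every `0 < M ≤ T`,
`‖λ_T Ψ − m(Ψ)‖² ≤ (2M‖Ψ‖² + (2C/η) e^{−ηM}) / T`. -/
theorem effective_mean_ergodic_bound_continuous
    {X : Type*} [MeasurableSpace X] (m : Measure X) [IsProbabilityMeasure m]
    (φ : ℝ → X → X)
    (hφ0 : φ 0 = id)
    (hφadd : ∀ s t : ℝ, φ (s + t) = φ s ∘ φ t)
    (hφmeas : Measurable fun p : ℝ × X => φ p.1 p.2)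
    (hφpres : ∀ t : ℝ, MeasurePreserving (φ t) m m)
    (Ψ : X → ℝ) (hΨ : MemLp Ψ 2 m)
    (C η : ℝ) (hC : 0 ≤ C) (hη : 0 < η)
    (hdecay : ∀ t : ℝ, 0 ≤ t →
      |(∫ x, Ψ (φ t x) * Ψ x ∂m) - (∫ x, Ψ x ∂m) ^ 2| ≤ C * Real.exp (-η * t)) :
    ∀ T : ℝ, 1 ≤ T → ∀ M : ℝ, 0 < M → M ≤ T →
      ∫ x, ((1 / T) * (∫ t in (0:ℝ)..T, Ψ (φ t x)) - ∫ y, Ψ y ∂m) ^ 2 ∂m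
        ≤ (2 * M * (∫ x, (Ψ x) ^ 2 ∂m) + (2 * C / η) * Real.exp (-η * M)) / T := by
  intro T hT M hM hMT
  set g : X → ℝ := hΨ.1.mk Ψ with hgdef
  have hgsm : StronglyMeasurable g := hΨ.1.stronglyMeasurable_mk
  have hgm : Measurable g := hgsm.measurable
  have hΨg : Ψ =ᵐ[m] g := hΨ.1.ae_eq_mk
  have hgL2 : MemLp g 2 m := hΨ.ae_eq hΨg
  have hmean : (∫ y, Ψ y ∂m) = ∫ y, g y ∂m := integral_congr_ae hΨg
  have hsq : (∫ x, (Ψ x) ^ 2 ∂m) = ∫ x, (g x) ^ 2 ∂m := by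
    refine integral_congr_ae ?_
    filter_upwards [hΨg] with x hx
    rw [hx]
  have hdecay' : ∀ t : ℝ, 0 ≤ t →
      |(∫ x, g (φ t x) * g x ∂m) - (∫ x, g x ∂m) ^ 2| ≤ C * Real.exp (-η * t) := by
    intro t ht
    have hcompae : Ψ ∘ φ t =ᵐ[m] g ∘ φ t :=
      (hφpres t).quasiMeasurePreserving.ae_eq_comp hΨg
    have heq : (∫ x, Ψ (φ t x) * Ψ x ∂m) = ∫ x, g (φ t x) * g x ∂m := by
      refine integral_congr_ae ?_
      filter_upwards [hcompae, hΨg] with x h1 h2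
      simp only [Function.comp_apply] at h1
      rw [h1, h2]
    rw [← heq, ← hmean]
    exact hdecay t ht
  set N : Set X := toMeasurable m {y | Ψ y ≠ g y} with hN
  have hNmeas : MeasurableSet N := measurableSet_toMeasurable _ _
  have hNnull : m N = 0 := by
    rw [hN, measure_toMeasurable]
    exact ae_iff.mp hΨg
  set μJ : Measure ℝ := volume.restrict (Ioc (0:ℝ) T) with hμJ
  haveI : IsFiniteMeasure μJ := by
    refine ⟨?_⟩
    rw [hμJ, Measure.restrict_apply_univ, Real.volume_Ioc]
    exact ENNReal.ofReal_lt_top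
  have hA : MeasurableSet {q : ℝ × X | φ q.1 q.2 ∈ N} := hφmeas hNmeas
  have hAnull : (μJ.prod m) {q : ℝ × X | φ q.1 q.2 ∈ N} = 0 := by
    rw [Measure.measure_prod_null hA]
    refine ae_of_all _ fun t => ?_
    show m (φ t ⁻¹' N) = 0
    rw [(hφpres t).measure_preimage hNmeas.nullMeasurableSet, hNnull]
  have hA' : MeasurableSet {q : X × ℝ | φ q.2 q.1 ∈ N} :=
    (hφmeas.comp (measurable_snd.prodMk measurable_fst)) hNmeas
  have hAnull' : (m.prod μJ) {q : X × ℝ | φ q.2 q.1 ∈ N} = 0 := by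
    rw [← Measure.prod_swap, Measure.map_apply measurable_swap hA']
    have hpre : Prod.swap ⁻¹' {q : X × ℝ | φ q.2 q.1 ∈ N}
        = {q : ℝ × X | φ q.1 q.2 ∈ N} := rfl
    rw [hpre, hAnull]
  have hae_pt : ∀ᵐ x ∂m, ∀ᵐ t ∂μJ, Ψ (φ t x) = g (φ t x) := by
    have h0 : ∀ᵐ q ∂(m.prod μJ), q ∉ {q : X × ℝ | φ q.2 q.1 ∈ N} :=
      measure_eq_zero_iff_ae_notMem.mp hAnull'
    filter_upwards [Measure.ae_ae_of_ae_prod h0] with x hx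
    filter_upwards [hx] with t ht
    by_contra hne
    exact ht (subset_toMeasurable m _ hne)
  have hfinal : ∀ᵐ x ∂m,
      ((1 / T) * (∫ t in (0:ℝ)..T, Ψ (φ t x)) - ∫ y, Ψ y ∂m) ^ 2
        = ((1 / T) * (∫ t in (0:ℝ)..T, g (φ t x)) - ∫ y, g y ∂m) ^ 2 := by
    filter_upwards [hae_pt] with x hx
    have hT0 : (0:ℝ) ≤ T := le_trans zero_le_one hT
    have hIeq : (∫ t in (0:ℝ)..T, Ψ (φ t x)) = ∫ t in (0:ℝ)..T, g (φ t x) := by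
      rw [intervalIntegral.integral_of_le hT0, intervalIntegral.integral_of_le hT0]
      exact integral_congr_ae hx
    rw [hIeq, hmean]
  rw [integral_congr_ae hfinal, hsq]
  exact aux_main m φ hφ0 hφadd hφmeas hφpres g hgm hgL2 C η hC hη hdecay' T hT M hM hMT
end

section
/- (Measure of the exceptional set, conditional form of Proposition 4.2.) For every η > 0 there is a constant c = c(η) > 0 with the following property. Let Ψ : X → [0,∞) be measurable, bounded, with ‖Ψ‖ > 0 and m(Ψ) > 0, and suppose there is S ≥ ‖Ψ‖ such that |∫_X Ψ(T^j x)Ψ(x) dm(x) − m(Ψ)²| ≤ S² e^{−ηj} for all integers j ≥ 1. Then for every integer N ≥ 1, m(𝒞_{N,Ψ}) ≤ c · (1 + log(S/‖Ψ‖)) · ‖Ψ‖² / (N · m(Ψ)²). -/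
open MeasureTheory Filter Set

private lemma aux_push {X : Type} [MeasurableSpace X] {m : Measure X}
    {T : X → X} (hT : MeasurePreserving T m m) (g : X → ℝ) (hg : Measurable g) (l : ℕ) :
    (∫ x, g (T^[l] x) ∂m) = ∫ x, g x ∂m := by
  have hmap : Measure.map (T^[l]) m = m := (hT.iterate l).map_eq
  have h := MeasureTheory.integral_map (μ := m) (φ := T^[l]) (hT.iterate l).aemeasurable
    (f := g) (by rw [hmap]; exact hg.aestronglyMeasurable)
  rw [hmap] at h
  exact h.symm

/-- Covariance bound by the second moment. -/
private lemma aux_cov_le {X : Type} [MeasurableSpace X] {m : Measure X} [IsProbabilityMeasure m]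
    {T : X → X} (hT : MeasurePreserving T m m) {Ψ : X → ℝ} (hΨm : Measurable Ψ)
    (hΨ0 : ∀ x, 0 ≤ Ψ x) {M : ℝ} (hM : ∀ x, Ψ x ≤ M) (j : ℕ) :
    |(∫ x, Ψ (T^[j] x) * Ψ x ∂m) - (∫ x, Ψ x ∂m) ^ 2| ≤ ∫ x, (Ψ x) ^ 2 ∂m := by
  set μ := ∫ x, Ψ x ∂m with hμdef
  set E := ∫ x, (Ψ x) ^ 2 ∂m with hEdef
  have hTm : Measurable T := hT.measurable
  have hmk : ∀ k : ℕ, Measurable fun x => Ψ (T^[k] x) := fun k => hΨm.comp (hTm.iterate k)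
  set M' := max M 0 with hM'def
  have hbd : ∀ (k : ℕ) (x : X), |Ψ (T^[k] x)| ≤ M' := fun k x => by
    rw [abs_of_nonneg (hΨ0 _)]; exact le_max_of_le_left (hM _)
  have hint : ∀ k : ℕ, Integrable (fun x => Ψ (T^[k] x)) m := fun k =>
    ⟨(hmk k).aestronglyMeasurable, HasFiniteIntegral.of_bounded (ae_of_all _ (hbd k))⟩
  have hΨint : Integrable Ψ m := by simpa using hint 0
  have hsqint : ∀ k : ℕ, Integrable (fun x => Ψ (T^[k] x) ^ 2) m := fun k =>
    ⟨((hmk k).pow_const 2).aestronglyMeasurable,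
      HasFiniteIntegral.of_bounded (C := M' ^ 2) (ae_of_all _ fun x => by
        rw [Real.norm_eq_abs, abs_pow]
        exact pow_le_pow_left₀ (abs_nonneg _) (hbd k x) 2)⟩
  have hprodInt : Integrable (fun x => Ψ (T^[j] x) * Ψ x) m :=
    ⟨((hmk j).mul hΨm).aestronglyMeasurable,
      HasFiniteIntegral.of_bounded (C := M' * M') (ae_of_all _ fun x => by
        rw [Real.norm_eq_abs, abs_mul]
        exact mul_le_mul (hbd j x) (by simpa using hbd 0 x) (abs_nonneg _)
          (le_max_right _ _))⟩
  have hsq : (∫ x, Ψ (T^[j] x) ^ 2 ∂m) = E := by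
    simpa using aux_push hT (fun x => Ψ x ^ 2) (hΨm.pow_const 2) j
  -- μ² ≤ E
  have hμ2E : μ ^ 2 ≤ E := by
    have h0 : 0 ≤ ∫ x, (Ψ x - μ) ^ 2 ∂m := integral_nonneg fun x => sq_nonneg _
    have hfun : (fun x => (Ψ x - μ) ^ 2) = fun x => Ψ x ^ 2 - 2 * μ * Ψ x + μ * μ :=
      funext fun x => by ring
    have hsq0 : Integrable (fun x => Ψ x ^ 2) m := by simpa using hsqint 0
    have hs1 : Integrable (fun x => Ψ x ^ 2 - 2 * μ * Ψ x) m :=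
      hsq0.sub (hΨint.const_mul (2 * μ))
    have hcalc : (∫ x, (Ψ x - μ) ^ 2 ∂m) = E - μ ^ 2 := by
      rw [hfun, integral_add hs1 (integrable_const _), integral_sub hsq0
        (hΨint.const_mul (2 * μ)), integral_const_mul, integral_const]
      simp only [measure_univ, ENNReal.toReal_one, probReal_univ, one_smul, ← hμdef, ← hEdef]
      ring
    linarith [hcalc ▸ h0]
  -- upper bound on the product integral
  have hub : (∫ x, Ψ (T^[j] x) * Ψ x ∂m) ≤ E := by
    have hmono : (∫ x, Ψ (T^[j] x) * Ψ x ∂m)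
        ≤ ∫ x, (Ψ (T^[j] x) ^ 2 + Ψ x ^ 2) / 2 ∂m := by
      refine integral_mono hprodInt (((hsqint j).add (by simpa using hsqint 0)).div_const 2) ?_
      intro x
      have := two_mul_le_add_sq (Ψ (T^[j] x)) (Ψ x)
      dsimp only
      linarith
    have heq : (∫ x, (Ψ (T^[j] x) ^ 2 + Ψ x ^ 2) / 2 ∂m) = E := by
      rw [integral_div, integral_add (hsqint j) (by simpa using hsqint 0), hsq, ← hEdef]
      ring
    linarith [heq ▸ hmono]
  have hlb : 0 ≤ ∫ x, Ψ (T^[j] x) * Ψ x ∂m :=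
    integral_nonneg fun x => mul_nonneg (hΨ0 _) (hΨ0 _)
  rw [abs_le]
  constructor <;> nlinarith [sq_nonneg μ]

/-- Second-moment (variance) bound for Birkhoff sums via covariance bounds. -/
private lemma aux_second_moment {X : Type} [MeasurableSpace X] {m : Measure X}
    [IsProbabilityMeasure m] {T : X → X} (hT : MeasurePreserving T m m)
    {Ψ : X → ℝ} (hΨm : Measurable Ψ) (hΨ0 : ∀ x, 0 ≤ Ψ x) {M : ℝ} (hM : ∀ x, Ψ x ≤ M)
    {B : ℕ → ℝ}
    (hB : ∀ j : ℕ, |(∫ x, Ψ (T^[j] x) * Ψ x ∂m) - (∫ x, Ψ x ∂m) ^ 2| ≤ B j)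
    {N : ℕ} (hN : 1 ≤ N) :
    (N : ℝ) * ∫ x, ((1 / (N : ℝ)) * ∑ k ∈ Finset.Icc 1 N, Ψ (T^[k] x) - ∫ y, Ψ y ∂m) ^ 2 ∂m
      ≤ 2 * ∑ j ∈ Finset.range N, B j := by
  classical
  set μ := ∫ y, Ψ y ∂m with hμdef
  have hTm : Measurable T := hT.measurable
  have hmk : ∀ k : ℕ, Measurable fun x => Ψ (T^[k] x) := fun k => hΨm.comp (hTm.iterate k)
  set M' := max M 0 with hM'def
  have hbd : ∀ (k : ℕ) (x : X), |Ψ (T^[k] x)| ≤ M' := fun k x => by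
    rw [abs_of_nonneg (hΨ0 _)]; exact le_max_of_le_left (hM _)
  have hint : ∀ k : ℕ, Integrable (fun x => Ψ (T^[k] x)) m := fun k =>
    ⟨(hmk k).aestronglyMeasurable, HasFiniteIntegral.of_bounded (ae_of_all _ (hbd k))⟩
  have hcentbd : ∀ (k : ℕ) (x : X), |Ψ (T^[k] x) - μ| ≤ M' + |μ| := fun k x => by
    calc |Ψ (T^[k] x) - μ| ≤ |Ψ (T^[k] x)| + |μ| := abs_sub _ _
      _ ≤ M' + |μ| := add_le_add (hbd k x) le_rfl
  have hcentInt : ∀ k l : ℕ,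
      Integrable (fun x => (Ψ (T^[k] x) - μ) * (Ψ (T^[l] x) - μ)) m := fun k l =>
    ⟨(((hmk k).sub measurable_const).mul ((hmk l).sub measurable_const)).aestronglyMeasurable,
      HasFiniteIntegral.of_bounded (C := (M' + |μ|) * (M' + |μ|)) (ae_of_all _ fun x => by
        rw [Real.norm_eq_abs, abs_mul]
        exact mul_le_mul (hcentbd k x) (hcentbd l x) (abs_nonneg _)
          (le_trans (abs_nonneg _) (hcentbd k x)))⟩
  have hprodInt : ∀ k l : ℕ, Integrable (fun x => Ψ (T^[k] x) * Ψ (T^[l] x)) m := fun k l =>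
    ⟨((hmk k).mul (hmk l)).aestronglyMeasurable,
      HasFiniteIntegral.of_bounded (C := M' * M') (ae_of_all _ fun x => by
        rw [Real.norm_eq_abs, abs_mul]
        exact mul_le_mul (hbd k x) (hbd l x) (abs_nonneg _) (le_max_right _ _))⟩
  have hmean : ∀ k : ℕ, (∫ x, Ψ (T^[k] x) ∂m) = μ := fun k => aux_push hT Ψ hΨm k
  have hprod : ∀ j l : ℕ,
      (∫ x, Ψ (T^[j + l] x) * Ψ (T^[l] x) ∂m) = ∫ x, Ψ (T^[j] x) * Ψ x ∂m := by
    intro j l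
    have h := aux_push hT (fun x => Ψ (T^[j] x) * Ψ x) ((hmk j).mul hΨm) l
    simpa [Function.iterate_add_apply] using h
  have hexp : ∀ k l : ℕ, (∫ x, (Ψ (T^[k] x) - μ) * (Ψ (T^[l] x) - μ) ∂m)
      = (∫ x, Ψ (T^[k] x) * Ψ (T^[l] x) ∂m) - μ ^ 2 := by
    intro k l
    have hfun : (fun x => (Ψ (T^[k] x) - μ) * (Ψ (T^[l] x) - μ))
        = fun x => Ψ (T^[k] x) * Ψ (T^[l] x) - μ * Ψ (T^[k] x) - μ * Ψ (T^[l] x) + μ * μ :=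
      funext fun x => by ring
    have hs1 : Integrable (fun x => Ψ (T^[k] x) * Ψ (T^[l] x) - μ * Ψ (T^[k] x)) m :=
      (hprodInt k l).sub ((hint k).const_mul μ)
    have hs2 : Integrable
        (fun x => Ψ (T^[k] x) * Ψ (T^[l] x) - μ * Ψ (T^[k] x) - μ * Ψ (T^[l] x)) m :=
      hs1.sub ((hint l).const_mul μ)
    rw [hfun, integral_add hs2 (integrable_const _),
      integral_sub hs1 ((hint l).const_mul μ),
      integral_sub (hprodInt k l) ((hint k).const_mul μ),
      integral_const_mul, integral_const_mul, integral_const, hmean, hmean]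
    simp only [measure_univ, ENNReal.toReal_one, probReal_univ, one_smul]
    ring
  have hcovle : ∀ k l : ℕ, l ≤ k →
      (∫ x, (Ψ (T^[k] x) - μ) * (Ψ (T^[l] x) - μ) ∂m) ≤ B (k - l) := by
    intro k l hkl
    have h := hprod (k - l) l
    rw [Nat.sub_add_cancel hkl] at h
    rw [hexp k l, h]
    exact (le_abs_self _).trans (hB _)
  have hsymm : ∀ k l : ℕ, (∫ x, (Ψ (T^[k] x) - μ) * (Ψ (T^[l] x) - μ) ∂m)
      = ∫ x, (Ψ (T^[l] x) - μ) * (Ψ (T^[k] x) - μ) ∂m := by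
    intro k l
    have : (fun x => (Ψ (T^[k] x) - μ) * (Ψ (T^[l] x) - μ))
        = fun x => (Ψ (T^[l] x) - μ) * (Ψ (T^[k] x) - μ) := funext fun x => mul_comm _ _
    rw [this]
  have hBnn : ∀ j, 0 ≤ B j := fun j => (abs_nonneg _).trans (hB j)
  have himg : ∀ (s : Finset ℕ) (g : ℕ → ℕ), (∀ a ∈ s, ∀ b ∈ s, g a = g b → a = b) →
      (∀ a ∈ s, g a < N) → ∑ l ∈ s, B (g l) ≤ ∑ j ∈ Finset.range N, B j := by
    intro s g hinj hlt
    rw [← Finset.sum_image hinj]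
    refine Finset.sum_le_sum_of_subset_of_nonneg ?_ fun j _ _ => hBnn j
    intro j hj
    rcases Finset.mem_image.1 hj with ⟨a, ha, rfl⟩
    exact Finset.mem_range.2 (hlt a ha)
  have key : ∀ k ∈ Finset.Icc 1 N,
      (∑ l ∈ Finset.Icc 1 N, ∫ x, (Ψ (T^[k] x) - μ) * (Ψ (T^[l] x) - μ) ∂m)
        ≤ 2 * ∑ j ∈ Finset.range N, B j := by
    intro k hk
    rw [Finset.mem_Icc] at hk
    rw [← Finset.sum_filter_add_sum_filter_not (Finset.Icc 1 N) (· ≤ k)]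
    have h1 : (∑ l ∈ (Finset.Icc 1 N).filter (· ≤ k),
        ∫ x, (Ψ (T^[k] x) - μ) * (Ψ (T^[l] x) - μ) ∂m) ≤ ∑ j ∈ Finset.range N, B j := by
      calc (∑ l ∈ (Finset.Icc 1 N).filter (· ≤ k),
          ∫ x, (Ψ (T^[k] x) - μ) * (Ψ (T^[l] x) - μ) ∂m)
          ≤ ∑ l ∈ (Finset.Icc 1 N).filter (· ≤ k), B (k - l) := by
            refine Finset.sum_le_sum fun l hl => ?_
            simp only [Finset.mem_filter, Finset.mem_Icc] at hl
            exact hcovle k l hl.2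
        _ ≤ ∑ j ∈ Finset.range N, B j := by
            refine himg _ _ (fun a ha b hb hab => ?_) (fun a ha => ?_)
            · simp only [Finset.mem_filter, Finset.mem_Icc] at ha hb
              omega
            · simp only [Finset.mem_filter, Finset.mem_Icc] at ha
              omega
    have h2 : (∑ l ∈ (Finset.Icc 1 N).filter (fun l => ¬ l ≤ k),
        ∫ x, (Ψ (T^[k] x) - μ) * (Ψ (T^[l] x) - μ) ∂m) ≤ ∑ j ∈ Finset.range N, B j := by
      calc (∑ l ∈ (Finset.Icc 1 N).filter (fun l => ¬ l ≤ k),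
          ∫ x, (Ψ (T^[k] x) - μ) * (Ψ (T^[l] x) - μ) ∂m)
          ≤ ∑ l ∈ (Finset.Icc 1 N).filter (fun l => ¬ l ≤ k), B (l - k) := by
            refine Finset.sum_le_sum fun l hl => ?_
            simp only [Finset.mem_filter, Finset.mem_Icc] at hl
            rw [hsymm]
            exact hcovle l k (le_of_not_ge hl.2)
        _ ≤ ∑ j ∈ Finset.range N, B j := by
            refine himg _ _ (fun a ha b hb hab => ?_) (fun a ha => ?_)
            · simp only [Finset.mem_filter, Finset.mem_Icc] at ha hb
              omega
            · simp only [Finset.mem_filter, Finset.mem_Icc] at ha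
              omega
    linarith
  have houter : (∑ k ∈ Finset.Icc 1 N, ∑ l ∈ Finset.Icc 1 N,
      ∫ x, (Ψ (T^[k] x) - μ) * (Ψ (T^[l] x) - μ) ∂m)
        ≤ (N : ℝ) * (2 * ∑ j ∈ Finset.range N, B j) := by
    calc (∑ k ∈ Finset.Icc 1 N, ∑ l ∈ Finset.Icc 1 N,
        ∫ x, (Ψ (T^[k] x) - μ) * (Ψ (T^[l] x) - μ) ∂m)
        ≤ ∑ _k ∈ Finset.Icc 1 N, (2 * ∑ j ∈ Finset.range N, B j) := Finset.sum_le_sum key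
      _ = (N : ℝ) * (2 * ∑ j ∈ Finset.range N, B j) := by
          rw [Finset.sum_const, Nat.card_Icc, Nat.add_sub_cancel, nsmul_eq_mul]
  have hNne : (N : ℝ) ≠ 0 := by positivity
  have hA : ∀ x : X, ((1 / (N : ℝ)) * ∑ k ∈ Finset.Icc 1 N, Ψ (T^[k] x) - μ) ^ 2
      = (1 / (N : ℝ)) ^ 2 * (∑ k ∈ Finset.Icc 1 N, (Ψ (T^[k] x) - μ)) ^ 2 := by
    intro x
    rw [Finset.sum_sub_distrib, Finset.sum_const, Nat.card_Icc, Nat.add_sub_cancel,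
      nsmul_eq_mul]
    field_simp
  have hvar : (∫ x, ((1 / (N : ℝ)) * ∑ k ∈ Finset.Icc 1 N, Ψ (T^[k] x) - μ) ^ 2 ∂m)
      = (1 / (N : ℝ)) ^ 2 * ∑ k ∈ Finset.Icc 1 N, ∑ l ∈ Finset.Icc 1 N,
          ∫ x, (Ψ (T^[k] x) - μ) * (Ψ (T^[l] x) - μ) ∂m := by
    calc (∫ x, ((1 / (N : ℝ)) * ∑ k ∈ Finset.Icc 1 N, Ψ (T^[k] x) - μ) ^ 2 ∂m)
        = ∫ x, (1 / (N : ℝ)) ^ 2 * (∑ k ∈ Finset.Icc 1 N, (Ψ (T^[k] x) - μ)) ^ 2 ∂m :=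
          integral_congr_ae (ae_of_all _ hA)
      _ = (1 / (N : ℝ)) ^ 2 * ∫ x, (∑ k ∈ Finset.Icc 1 N, (Ψ (T^[k] x) - μ)) ^ 2 ∂m :=
          integral_const_mul _ _
      _ = (1 / (N : ℝ)) ^ 2 * ∑ k ∈ Finset.Icc 1 N, ∑ l ∈ Finset.Icc 1 N,
            ∫ x, (Ψ (T^[k] x) - μ) * (Ψ (T^[l] x) - μ) ∂m := by
          congr 1
          have hfun2 : (fun x => (∑ k ∈ Finset.Icc 1 N, (Ψ (T^[k] x) - μ)) ^ 2)
              = fun x => ∑ k ∈ Finset.Icc 1 N, ∑ l ∈ Finset.Icc 1 N,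
                  (Ψ (T^[k] x) - μ) * (Ψ (T^[l] x) - μ) := by
            funext x
            rw [sq, Finset.sum_mul_sum]
          rw [hfun2, integral_finset_sum _ fun k _ =>
            integrable_finset_sum _ fun l _ => hcentInt k l]
          exact Finset.sum_congr rfl fun k _ => integral_finset_sum _ fun l _ => hcentInt k l
  rw [hvar]
  calc (N : ℝ) * ((1 / (N : ℝ)) ^ 2 * ∑ k ∈ Finset.Icc 1 N, ∑ l ∈ Finset.Icc 1 N,
        ∫ x, (Ψ (T^[k] x) - μ) * (Ψ (T^[l] x) - μ) ∂m)
      ≤ (N : ℝ) * ((1 / (N : ℝ)) ^ 2 * ((N : ℝ) * (2 * ∑ j ∈ Finset.range N, B j))) := by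
        refine mul_le_mul_of_nonneg_left (mul_le_mul_of_nonneg_left houter ?_) ?_ <;> positivity
    _ = 2 * ∑ j ∈ Finset.range N, B j := by
        field_simp

/-- (Measure of the exceptional set.) For every `η > 0` there is
`c = c(η) > 0` such that: for any probability-preserving system `(X, m, T)`, any
bounded non-negative measurable `Ψ` with `‖Ψ‖ > 0` and `m(Ψ) > 0`, and any
`S ≥ ‖Ψ‖` with `|∫ Ψ(T^j x)Ψ(x) dm − m(Ψ)²| ≤ S² e^{−ηj}` for all `j ≥ 1`,
one has for every `N ≥ 1`:
`m(𝒞_{N,Ψ}) ≤ c (1 + log(S/‖Ψ‖)) ‖Ψ‖² / (N m(Ψ)²)`, where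
`𝒞_{N,Ψ} = {x : |λ_N Ψ(x) − m(Ψ)| ≥ m(Ψ)/2}`. -/
theorem measure_of_exceptional_set
    (η : ℝ) (hη : 0 < η) :
    ∃ c : ℝ, 0 < c ∧
      ∀ (X : Type) [MeasurableSpace X] (m : Measure X) [IsProbabilityMeasure m]
        (T : X → X), MeasurePreserving T m m →
        ∀ (Ψ : X → ℝ), Measurable Ψ → (∀ x, 0 ≤ Ψ x) → (∃ M : ℝ, ∀ x, Ψ x ≤ M) →
          0 < ∫ x, (Ψ x) ^ 2 ∂m → 0 < ∫ x, Ψ x ∂m →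
          ∀ S : ℝ, Real.sqrt (∫ x, (Ψ x) ^ 2 ∂m) ≤ S →
          (∀ j : ℕ, 1 ≤ j →
            |(∫ x, Ψ (T^[j] x) * Ψ x ∂m) - (∫ x, Ψ x ∂m) ^ 2|
              ≤ S ^ 2 * Real.exp (-η * j)) →
          ∀ N : ℕ, 1 ≤ N →
            (m {x | (∫ y, Ψ y ∂m) / 2
                  ≤ |(1 / (N : ℝ)) * ∑ k ∈ Finset.Icc 1 N, Ψ (T^[k] x)
                      - ∫ y, Ψ y ∂m|}).toReal
              ≤ c * (1 + Real.log (S / Real.sqrt (∫ x, (Ψ x) ^ 2 ∂m)))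
                  * (∫ x, (Ψ x) ^ 2 ∂m) / ((N : ℝ) * (∫ x, Ψ x ∂m) ^ 2) := by
  classical
  have hr0 : 0 < Real.exp (-η) := Real.exp_pos _
  have hr1 : Real.exp (-η) < 1 := by
    rw [← Real.exp_zero]
    exact Real.exp_lt_exp.2 (by linarith)
  have hrs : 0 < 1 - Real.exp (-η) := by linarith
  refine ⟨8 * (2 / η + 2 + (1 - Real.exp (-η))⁻¹), by positivity, ?_⟩
  intro X _ m _ T hT Ψ hΨm hΨ0 hMb hE hμpos S hS hcorr N hN
  obtain ⟨M, hM⟩ := hMb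
  set r := Real.exp (-η) with hrdef
  set μ := ∫ y, Ψ y ∂m with hμdef
  set E := ∫ x, (Ψ x) ^ 2 ∂m with hEdef
  set σ := Real.sqrt E with hσdef
  have hσ : 0 < σ := Real.sqrt_pos.2 hE
  have hσ2 : σ ^ 2 = E := Real.sq_sqrt hE.le
  have hS0 : 0 < S := hσ.trans_le hS
  set L := Real.log (S / σ) with hLdef
  have hL0 : 0 ≤ L := Real.log_nonneg ((one_le_div hσ).2 hS)
  set J := ⌈2 / η * L⌉₊ with hJdef
  set B : ℕ → ℝ := fun j => if j = 0 then E else min E (S ^ 2 * r ^ j) with hBdef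
  have hcovE : ∀ j : ℕ, |(∫ x, Ψ (T^[j] x) * Ψ x ∂m) - μ ^ 2| ≤ E := fun j =>
    aux_cov_le hT hΨm hΨ0 hM j
  have hB : ∀ j : ℕ, |(∫ x, Ψ (T^[j] x) * Ψ x ∂m) - μ ^ 2| ≤ B j := by
    intro j
    by_cases hj : j = 0
    · rw [hBdef]; simp only [hj, if_pos rfl]
      exact hcovE 0
    · rw [hBdef]; simp only [if_neg hj]
      refine le_min (hcovE j) ?_
      have h1 := hcorr j (Nat.one_le_iff_ne_zero.2 hj)
      have h2 : Real.exp (-η * (j : ℝ)) = r ^ j := by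
        rw [show -η * (j : ℝ) = (j : ℝ) * -η from mul_comm _ _, Real.exp_nat_mul]
      rw [← h2]
      exact h1
  have hBnn : ∀ j, 0 ≤ B j := fun j => (abs_nonneg _).trans (hB j)
  -- geometric sum bound
  have hgeo : ∀ n : ℕ, (∑ i ∈ Finset.range n, r ^ i) ≤ (1 - r)⁻¹ := fun n => by
    have hsummable := summable_geometric_of_lt_one hr0.le hr1
    calc (∑ i ∈ Finset.range n, r ^ i) ≤ ∑' i : ℕ, r ^ i :=
          Summable.sum_le_tsum _ (fun i _ => pow_nonneg hr0.le i) hsummable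
      _ = (1 - r)⁻¹ := tsum_geometric_of_lt_one hr0.le hr1
  -- key decay estimate
  have hJr : S ^ 2 * r ^ J ≤ E := by
    have h1 : 2 / η * L ≤ (J : ℝ) := Nat.le_ceil _
    have hLr : r ^ J = Real.exp (-(η * (J : ℝ))) := by
      rw [hrdef, ← Real.exp_nat_mul]
      congr 1
      ring
    have h2 : Real.exp (-(η * (J : ℝ))) ≤ Real.exp (-(2 * L)) := by
      refine Real.exp_le_exp.2 ?_
      have h3 : η * (2 / η * L) ≤ η * (J : ℝ) := mul_le_mul_of_nonneg_left h1 hη.le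
      have h4 : η * (2 / η * L) = 2 * L := by field_simp
      linarith
    have hexpL : Real.exp L = S / σ := Real.exp_log (div_pos hS0 hσ)
    have h3 : Real.exp (-(2 * L)) = (σ / S) ^ 2 := by
      rw [show -(2 * L) = -L + -L by ring, Real.exp_add, Real.exp_neg, hexpL, inv_div, sq]
    calc S ^ 2 * r ^ J = S ^ 2 * Real.exp (-(η * (J : ℝ))) := by rw [hLr]
      _ ≤ S ^ 2 * Real.exp (-(2 * L)) := mul_le_mul_of_nonneg_left h2 (sq_nonneg S)
      _ = S ^ 2 * (σ / S) ^ 2 := by rw [h3]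
      _ = σ ^ 2 := by
          rw [div_pow]
          field_simp
      _ = E := hσ2
  have hB' := hB
  rw [hμdef] at hB'
  clear_value r μ E σ L J B
  -- bound on the sum of B
  have hsum : (∑ j ∈ Finset.range N, B j) ≤ ((J : ℝ) + 1) * E + E * (1 - r)⁻¹ := by
    set N' := max N (J + 1) with hN'def
    have step1 : (∑ j ∈ Finset.range N, B j) ≤ ∑ j ∈ Finset.range N', B j :=
      Finset.sum_le_sum_of_subset_of_nonneg
        (Finset.range_subset_range.2 (le_max_left _ _)) fun j _ _ => hBnn j
    have step2 : (∑ j ∈ Finset.range N', B j)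
        ≤ ∑ j ∈ Finset.range N', (if j ≤ J then E else S ^ 2 * r ^ j) := by
      refine Finset.sum_le_sum fun j _ => ?_
      by_cases h0 : j = 0
      · subst h0
        rw [hBdef]
        simp [Nat.zero_le]
      · rw [hBdef]
        simp only [if_neg h0]
        by_cases hjJ : j ≤ J
        · rw [if_pos hjJ]; exact min_le_left _ _
        · rw [if_neg hjJ]; exact min_le_right _ _
    have hsplit : (∑ j ∈ Finset.range N', (if j ≤ J then E else S ^ 2 * r ^ j))
        = (∑ j ∈ Finset.range (J + 1), (if j ≤ J then E else S ^ 2 * r ^ j))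
          + ∑ j ∈ Finset.Ico (J + 1) N', (if j ≤ J then E else S ^ 2 * r ^ j) := by
      rw [Finset.range_eq_Ico N', Finset.range_eq_Ico (J + 1)]
      exact (Finset.sum_Ico_consecutive _ (Nat.zero_le _)
        (le_max_right N (J + 1))).symm
    have hpart1 : (∑ j ∈ Finset.range (J + 1), (if j ≤ J then E else S ^ 2 * r ^ j))
        = ((J : ℝ) + 1) * E := by
      rw [Finset.sum_congr rfl fun j hj => if_pos (Nat.lt_succ_iff.1 (Finset.mem_range.1 hj)),
        Finset.sum_const, Finset.card_range, nsmul_eq_mul]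
      push_cast
      ring
    have hpart2 : (∑ j ∈ Finset.Ico (J + 1) N', (if j ≤ J then E else S ^ 2 * r ^ j))
        ≤ E * (1 - r)⁻¹ := by
      have hcongr : (∑ j ∈ Finset.Ico (J + 1) N', (if j ≤ J then E else S ^ 2 * r ^ j))
          = ∑ j ∈ Finset.Ico (J + 1) N', S ^ 2 * r ^ j :=
        Finset.sum_congr rfl fun j hj =>
          if_neg (by have := (Finset.mem_Ico.1 hj).1; omega)
      rw [hcongr, Finset.sum_Ico_eq_sum_range]
      have hfact : (∑ i ∈ Finset.range (N' - (J + 1)), S ^ 2 * r ^ (J + 1 + i))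
          = S ^ 2 * r ^ (J + 1) * ∑ i ∈ Finset.range (N' - (J + 1)), r ^ i := by
        rw [Finset.mul_sum]
        exact Finset.sum_congr rfl fun i _ => by rw [pow_add]; ring
      rw [hfact]
      have hS2r : S ^ 2 * r ^ (J + 1) ≤ E := by
        calc S ^ 2 * r ^ (J + 1) = S ^ 2 * r ^ J * r := by rw [pow_succ]; ring
          _ ≤ E * 1 := mul_le_mul hJr hr1.le hr0.le hE.le
          _ = E := mul_one E
      calc S ^ 2 * r ^ (J + 1) * ∑ i ∈ Finset.range (N' - (J + 1)), r ^ i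
          ≤ S ^ 2 * r ^ (J + 1) * (1 - r)⁻¹ :=
            mul_le_mul_of_nonneg_left (hgeo _) (by positivity)
        _ ≤ E * (1 - r)⁻¹ := mul_le_mul_of_nonneg_right hS2r (inv_nonneg.2 hrs.le)
    calc (∑ j ∈ Finset.range N, B j) ≤ _ := step1
      _ ≤ _ := step2
      _ = _ := hsplit
      _ ≤ ((J : ℝ) + 1) * E + E * (1 - r)⁻¹ := by rw [hpart1]; linarith
  -- the second moment bound
  have h2nd := aux_second_moment hT hΨm hΨ0 hM hB' hN
  rw [← hμdef] at h2nd
  -- Markov inequality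
  have hN0 : (0 : ℝ) < N := by exact_mod_cast hN
  set M' := max M 0 with hM'def
  have hbd : ∀ x : X, |Ψ x| ≤ M' := fun x => by
    rw [abs_of_nonneg (hΨ0 _)]; exact le_max_of_le_left (hM _)
  have hAbd : ∀ x : X,
      |(1 / (N : ℝ)) * ∑ k ∈ Finset.Icc 1 N, Ψ (T^[k] x) - μ| ≤ M' + |μ| := by
    intro x
    have hsb : |(1 / (N : ℝ)) * ∑ k ∈ Finset.Icc 1 N, Ψ (T^[k] x)| ≤ M' := by
      rw [abs_mul, abs_of_nonneg (by positivity : (0:ℝ) ≤ 1 / (N : ℝ)),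
        abs_of_nonneg (Finset.sum_nonneg fun k _ => hΨ0 _)]
      have hsum_le : (∑ k ∈ Finset.Icc 1 N, Ψ (T^[k] x)) ≤ (N : ℝ) * M' := by
        calc (∑ k ∈ Finset.Icc 1 N, Ψ (T^[k] x)) ≤ ∑ _k ∈ Finset.Icc 1 N, M' :=
              Finset.sum_le_sum fun k _ => le_max_of_le_left (hM _)
          _ = (N : ℝ) * M' := by
              rw [Finset.sum_const, Nat.card_Icc, Nat.add_sub_cancel, nsmul_eq_mul]
      calc (1 / (N : ℝ)) * ∑ k ∈ Finset.Icc 1 N, Ψ (T^[k] x)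
          ≤ (1 / (N : ℝ)) * ((N : ℝ) * M') :=
            mul_le_mul_of_nonneg_left hsum_le (by positivity)
        _ = M' := by field_simp
    calc |(1 / (N : ℝ)) * ∑ k ∈ Finset.Icc 1 N, Ψ (T^[k] x) - μ|
        ≤ |(1 / (N : ℝ)) * ∑ k ∈ Finset.Icc 1 N, Ψ (T^[k] x)| + |μ| := abs_sub _ _
      _ ≤ M' + |μ| := add_le_add hsb le_rfl
  have hAmeas : Measurable fun x : X =>
      ((1 / (N : ℝ)) * ∑ k ∈ Finset.Icc 1 N, Ψ (T^[k] x) - μ) ^ 2 :=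
    (((Finset.measurable_sum _ fun k _ =>
      hΨm.comp (hT.measurable.iterate k)).const_mul _).sub measurable_const).pow_const 2
  have hA2int : Integrable
      (fun x : X => ((1 / (N : ℝ)) * ∑ k ∈ Finset.Icc 1 N, Ψ (T^[k] x) - μ) ^ 2) m :=
    ⟨hAmeas.aestronglyMeasurable,
      HasFiniteIntegral.of_bounded (C := (M' + |μ|) ^ 2) (ae_of_all _ fun x => by
        rw [Real.norm_eq_abs, abs_pow]
        exact pow_le_pow_left₀ (abs_nonneg _) (hAbd x) 2)⟩
  have hmark := mul_meas_ge_le_integral_of_nonneg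
    (μ := m) (f := fun x : X => ((1 / (N : ℝ)) * ∑ k ∈ Finset.Icc 1 N, Ψ (T^[k] x) - μ) ^ 2)
    (ae_of_all _ fun x => sq_nonneg _) hA2int ((μ / 2) ^ 2)
  have hsetEq : {x : X | μ / 2
        ≤ |(1 / (N : ℝ)) * ∑ k ∈ Finset.Icc 1 N, Ψ (T^[k] x) - μ|}
      = {x : X | (μ / 2) ^ 2
        ≤ ((1 / (N : ℝ)) * ∑ k ∈ Finset.Icc 1 N, Ψ (T^[k] x) - μ) ^ 2} := by
    ext x
    simp only [Set.mem_setOf_eq]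
    constructor <;> intro h
    · nlinarith [sq_abs ((1 / (N : ℝ)) * ∑ k ∈ Finset.Icc 1 N, Ψ (T^[k] x) - μ),
        abs_nonneg ((1 / (N : ℝ)) * ∑ k ∈ Finset.Icc 1 N, Ψ (T^[k] x) - μ), hμpos]
    · nlinarith [sq_abs ((1 / (N : ℝ)) * ∑ k ∈ Finset.Icc 1 N, Ψ (T^[k] x) - μ),
        abs_nonneg ((1 / (N : ℝ)) * ∑ k ∈ Finset.Icc 1 N, Ψ (T^[k] x) - μ), hμpos]
  rw [hsetEq]
  -- final arithmetic
  have hVar0 : 0 ≤ ∫ x, ((1 / (N : ℝ)) * ∑ k ∈ Finset.Icc 1 N, Ψ (T^[k] x) - μ) ^ 2 ∂m :=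
    integral_nonneg fun x => sq_nonneg _
  have hmC0 : (0 : ℝ) ≤ (m {x : X | (μ / 2) ^ 2
      ≤ ((1 / (N : ℝ)) * ∑ k ∈ Finset.Icc 1 N, Ψ (T^[k] x) - μ) ^ 2}).toReal :=
    ENNReal.toReal_nonneg
  have hJle : (J : ℝ) ≤ 2 / η * L + 1 := by
    rw [hJdef]
    exact (Nat.ceil_lt_add_one (a := 2 / η * L) (by positivity)).le
  have ht : (0:ℝ) ≤ 2 / η := by positivity
  have hi : (0:ℝ) ≤ (1 - r)⁻¹ := inv_nonneg.2 hrs.le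
  have s4 : ((J : ℝ) + 1) * E + E * (1 - r)⁻¹
      ≤ (2 / η + 2 + (1 - r)⁻¹) * (1 + L) * E := by
    have d1 : ((J : ℝ) + 1) * E ≤ (2 / η * L + 2) * E :=
      mul_le_mul_of_nonneg_right (by linarith only [hJle]) hE.le
    have d2 : 0 ≤ (2 / η + 2 * L + (1 - r)⁻¹ * L) * E :=
      mul_nonneg (add_nonneg (add_nonneg ht (by linarith only [hL0]))
        (mul_nonneg hi hL0)) hE.le
    have d3 : (2 / η + 2 + (1 - r)⁻¹) * (1 + L) * E
        = (2 / η * L + 2) * E + E * (1 - r)⁻¹ + (2 / η + 2 * L + (1 - r)⁻¹ * L) * E := by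
      ring
    linarith only [d1, d2, d3]
  rw [le_div_iff₀ (mul_pos hN0 (pow_pos hμpos 2))]
  rw [measureReal_def] at hmark
  have u1 := mul_le_mul_of_nonneg_left hmark hN0.le
  have u2 : (N : ℝ) * ((μ / 2) ^ 2 * (m {x : X | (μ / 2) ^ 2
      ≤ ((1 / (N : ℝ)) * ∑ k ∈ Finset.Icc 1 N, Ψ (T^[k] x) - μ) ^ 2}).toReal)
      ≤ 2 * ((2 / η + 2 + (1 - r)⁻¹) * (1 + L) * E) := by
    linarith only [u1, h2nd, hsum, s4]
  have d4 : (N : ℝ) * ((μ / 2) ^ 2 * (m {x : X | (μ / 2) ^ 2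
      ≤ ((1 / (N : ℝ)) * ∑ k ∈ Finset.Icc 1 N, Ψ (T^[k] x) - μ) ^ 2}).toReal)
      = (m {x : X | (μ / 2) ^ 2
      ≤ ((1 / (N : ℝ)) * ∑ k ∈ Finset.Icc 1 N, Ψ (T^[k] x) - μ) ^ 2}).toReal
        * ((N : ℝ) * μ ^ 2) / 4 := by ring
  linarith only [u2, d4]
end

section
/- (Lemma 4.3, part 2.) Let (Ψ_n)_{n ≥ 1} be a pointwise decreasing family of bounded non-negative measurable functions on X with m(Ψ_n) > 0 for all n. Suppose there is a constant C ≥ 1 such that m(Ψ_{2^j}) ≤ C · m(Ψ_{2^{j+1}}) for all sufficiently large j, and that Σ_j m(𝒞_{2^{j−1}, Ψ_{2^j}}) < ∞. Then for m-almost every x ∈ X there is N(x) such that λ_n Ψ_n(x) ≥ m(Ψ_n)/(4C) for all n ≥ N(x). -/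
open MeasureTheory Filter Set

/-- The Birkhoff average `λ_N Ψ(x) = (1/N) Σ_{k=1}^N Ψ(T^k x)`. -/
noncomputable def birkhoffAvg {X : Type*} (T : X → X) (Ψ : X → ℝ) (N : ℕ) (x : X) : ℝ :=
  (1 / (N : ℝ)) * ∑ k ∈ Finset.Icc 1 N, Ψ (T^[k] x)

/-- The exceptional set `𝒞_{N,Ψ} = {x : |λ_N Ψ(x) − m(Ψ)| ≥ m(Ψ)/2}`. -/
noncomputable def excSet {X : Type*} [MeasurableSpace X] (m : Measure X)
    (T : X → X) (Ψ : X → ℝ) (N : ℕ) : Set X :=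
  {x | (∫ y, Ψ y ∂m) / 2 ≤ |birkhoffAvg T Ψ N x - ∫ y, Ψ y ∂m|}

/-- (Lemma 4.3, part 2.) Let `(Ψ_n)` be a pointwise decreasing
family of bounded non-negative measurable functions with `m(Ψ_n) > 0`. If there
is `C ≥ 1` such that `m(Ψ_{2^j}) ≤ C · m(Ψ_{2^{j+1}})` for all sufficiently large
`j`, and `Σ_j m(𝒞_{2^{j−1}, Ψ_{2^j}}) < ∞`, then for `m`-a.e. `x` one has
`λ_n Ψ_n(x) ≥ m(Ψ_n)/(4C)` for all sufficiently large `n`. -/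
theorem eventual_lower_bound_birkhoff_average
    {X : Type*} [MeasurableSpace X] (m : Measure X) [IsProbabilityMeasure m]
    (T : X → X) (hT : MeasurePreserving T m m)
    (Ψ : ℕ → X → ℝ)
    (hmeas : ∀ n, Measurable (Ψ n))
    (hnonneg : ∀ n x, 0 ≤ Ψ n x)
    (hbdd : ∀ n, ∃ M : ℝ, ∀ x, Ψ n x ≤ M)
    (hdec : ∀ n x, Ψ (n + 1) x ≤ Ψ n x)
    (hpos : ∀ n, 0 < ∫ x, Ψ n x ∂m)
    (C : ℝ) (hC : 1 ≤ C)
    (hcomp : ∀ᶠ j : ℕ in atTop, ∫ x, Ψ (2 ^ j) x ∂m ≤ C * ∫ x, Ψ (2 ^ (j + 1)) x ∂m)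
    (hsum : (∑' j : ℕ, m (excSet m T (Ψ (2 ^ (j + 1))) (2 ^ j))) ≠ ⊤) :
    ∀ᵐ x ∂m, ∃ N : ℕ, ∀ n, N ≤ n →
      (∫ y, Ψ n y ∂m) / (4 * C) ≤ birkhoffAvg T (Ψ n) n x := by
  -- pointwise antitonicity in the index
  have hanti : ∀ x, Antitone fun n => Ψ n x := fun x =>
    antitone_nat_of_succ_le fun n => hdec n x
  -- integrability
  have hint : ∀ n, Integrable (Ψ n) m := by
    intro n
    obtain ⟨M, hM⟩ := hbdd n
    exact (integrable_const M).mono' (hmeas n).aestronglyMeasurable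
      (Filter.Eventually.of_forall fun x => by
        rw [Real.norm_eq_abs, abs_of_nonneg (hnonneg n x)]; exact hM x)
  have hintmono : ∀ {a b : ℕ}, a ≤ b → ∫ x, Ψ b x ∂m ≤ ∫ x, Ψ a x ∂m := by
    intro a b hab
    exact integral_mono (hint b) (hint a) fun x => hanti x hab
  -- Borel–Cantelli
  have hbc := MeasureTheory.ae_eventually_notMem hsum
  filter_upwards [hbc] with x hx
  obtain ⟨J₁, hJ₁⟩ := Filter.eventually_atTop.mp hx
  obtain ⟨J₂, hJ₂⟩ := Filter.eventually_atTop.mp hcomp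
  refine ⟨2 ^ (max J₁ J₂), fun n hn => ?_⟩
  have hn0 : n ≠ 0 := Nat.one_le_iff_ne_zero.mp (le_trans Nat.one_le_two_pow hn)
  set j := Nat.log 2 n with hj
  have h1 : 2 ^ j ≤ n := Nat.pow_log_le_self 2 hn0
  have h2 : n < 2 ^ (j + 1) := Nat.lt_pow_succ_log_self one_lt_two n
  have hJj : max J₁ J₂ ≤ j :=
    (Nat.le_log_iff_pow_le one_lt_two hn0).mpr hn
  set I := ∫ y, Ψ (2 ^ (j + 1)) y ∂m with hI
  have hIpos : 0 < I := hpos _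
  -- from the complement of the exceptional set
  have hBx : I / 2 ≤ birkhoffAvg T (Ψ (2 ^ (j + 1))) (2 ^ j) x := by
    have := hJ₁ j (le_trans (le_max_left _ _) hJj)
    rw [excSet, Set.mem_setOf_eq, not_le] at this
    have := (abs_lt.mp this).1
    linarith
  set B := birkhoffAvg T (Ψ (2 ^ (j + 1))) (2 ^ j) x with hB
  -- sum comparison
  have hsum1 : ∑ k ∈ Finset.Icc 1 (2 ^ j), Ψ (2 ^ (j + 1)) (T^[k] x)
      ≤ ∑ k ∈ Finset.Icc 1 n, Ψ n (T^[k] x) := by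
    calc ∑ k ∈ Finset.Icc 1 (2 ^ j), Ψ (2 ^ (j + 1)) (T^[k] x)
        ≤ ∑ k ∈ Finset.Icc 1 (2 ^ j), Ψ n (T^[k] x) :=
          Finset.sum_le_sum fun k _ => hanti _ (Nat.le_of_lt_succ (Nat.lt_succ_of_lt h2))
      _ ≤ ∑ k ∈ Finset.Icc 1 n, Ψ n (T^[k] x) :=
          Finset.sum_le_sum_of_subset_of_nonneg
            (Finset.Icc_subset_Icc_right h1) (fun k _ _ => hnonneg n _)
  have hp : (0:ℝ) < 2 ^ j := by positivity
  have hnpos : (0:ℝ) < n := by exact_mod_cast Nat.pos_of_ne_zero hn0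
  have hn2p : (n:ℝ) ≤ 2 * 2 ^ j := by
    have : (n:ℝ) < (2:ℝ) ^ (j + 1) := by exact_mod_cast h2
    rw [pow_succ] at this; linarith [this]
  -- birkhoffAvg lower bound
  have hkey : I / 4 ≤ birkhoffAvg T (Ψ n) n x := by
    have hSeq : ∑ k ∈ Finset.Icc 1 (2 ^ j), Ψ (2 ^ (j + 1)) (T^[k] x)
        = (2 ^ j : ℝ) * B := by
      rw [hB, birkhoffAvg]
      push_cast
      field_simp
    have : (1 / (n:ℝ)) * ((2 ^ j : ℝ) * B) ≤ birkhoffAvg T (Ψ n) n x := by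
      rw [birkhoffAvg, ← hSeq]
      exact mul_le_mul_of_nonneg_left hsum1 (by positivity)
    refine le_trans ?_ this
    rw [one_div, inv_mul_eq_div, le_div_iff₀ hnpos]
    have hBnn : 0 ≤ B := le_trans (by linarith) hBx
    nlinarith [mul_le_mul_of_nonneg_left hn2p hBnn]
  -- conclude
  have hcompj := hJ₂ j (le_trans (le_max_right _ _) hJj)
  have hmono : ∫ y, Ψ n y ∂m ≤ ∫ x, Ψ (2 ^ j) x ∂m := hintmono h1
  rw [div_le_iff₀ (by positivity)]
  nlinarith [mul_le_mul_of_nonneg_right hkey (show (0:ℝ) ≤ 4 * C by positivity)]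
end

section
/- (Lemma 4.3, part 3.) Let (Ψ_n)_{n ≥ 1} be a pointwise decreasing family of bounded non-negative measurable functions on X with m(Ψ_n) > 0 for all n. Suppose there is a constant C ≥ 1 such that m(Ψ_{2^j}) ≤ C · m(Ψ_{2^{j+1}}) for all sufficiently large j, and that Σ_j m(𝒞_{2^{j+1}, Ψ_{2^j}}) < ∞. Then for m-almost every x ∈ X there is N(x) such that λ_n Ψ_n(x) ≤ 4C · m(Ψ_n) for all n ≥ N(x). -/
open MeasureTheory Filter Set

/-- (Lemma 4.3, part 3.) Let `(Ψ_n)` be a pointwise decreasing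
family of bounded non-negative measurable functions with `m(Ψ_n) > 0`. If there
is `C ≥ 1` such that `m(Ψ_{2^j}) ≤ C · m(Ψ_{2^{j+1}})` for all sufficiently large
`j`, and `Σ_j m(𝒞_{2^{j+1}, Ψ_{2^j}}) < ∞`, then for `m`-a.e. `x` one has
`λ_n Ψ_n(x) ≤ 4C · m(Ψ_n)` for all sufficiently large `n`. -/
theorem eventual_upper_bound_birkhoff_average
    {X : Type*} [MeasurableSpace X] (m : Measure X) [IsProbabilityMeasure m]
    (T : X → X) (hT : MeasurePreserving T m m)
    (Ψ : ℕ → X → ℝ)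
    (hmeas : ∀ n, Measurable (Ψ n))
    (hnonneg : ∀ n x, 0 ≤ Ψ n x)
    (hbdd : ∀ n, ∃ M : ℝ, ∀ x, Ψ n x ≤ M)
    (hdec : ∀ n x, Ψ (n + 1) x ≤ Ψ n x)
    (hpos : ∀ n, 0 < ∫ x, Ψ n x ∂m)
    (C : ℝ) (hC : 1 ≤ C)
    (hcomp : ∀ᶠ j : ℕ in atTop, ∫ x, Ψ (2 ^ j) x ∂m ≤ C * ∫ x, Ψ (2 ^ (j + 1)) x ∂m)
    (hsum : (∑' j : ℕ, m (excSet m T (Ψ (2 ^ j)) (2 ^ (j + 1)))) ≠ ⊤) :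
    ∀ᵐ x ∂m, ∃ N : ℕ, ∀ n, N ≤ n →
      birkhoffAvg T (Ψ n) n x ≤ 4 * C * ∫ y, Ψ n y ∂m := by
  have hC0 : (0:ℝ) < C := lt_of_lt_of_le one_pos hC
  -- pointwise antitonicity
  have hanti : ∀ x, Antitone fun n => Ψ n x := fun x =>
    antitone_nat_of_succ_le fun n => hdec n x
  -- integrability
  have hint : ∀ n, Integrable (Ψ n) m := by
    intro n
    obtain ⟨M, hM⟩ := hbdd n
    exact (integrable_const M).mono' (hmeas n).aestronglyMeasurable
      (Filter.Eventually.of_forall fun x => by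
        rw [Real.norm_eq_abs, abs_of_nonneg (hnonneg n x)]; exact hM x)
  have hIm : ∀ a b : ℕ, a ≤ b → ∫ x, Ψ b x ∂m ≤ ∫ x, Ψ a x ∂m := fun a b hab =>
    integral_mono (hint b) (hint a) fun x => hanti x hab
  obtain ⟨J₂, hJ₂⟩ := Filter.eventually_atTop.1 hcomp
  have hbc := MeasureTheory.ae_eventually_notMem hsum
  filter_upwards [hbc] with x hx
  obtain ⟨J₁, hJ₁⟩ := Filter.eventually_atTop.1 hx
  refine ⟨2 ^ (max J₁ J₂), fun n hn => ?_⟩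
  have hn0 : n ≠ 0 := Nat.one_le_iff_ne_zero.mp (le_trans Nat.one_le_two_pow hn)
  set j := Nat.log 2 n with hj
  have h1 : 2 ^ j ≤ n := Nat.pow_log_le_self 2 hn0
  have h2 : n < 2 ^ (j + 1) := Nat.lt_pow_succ_log_self (by norm_num) n
  have hJj : max J₁ J₂ ≤ j :=
    (Nat.le_log_iff_pow_le (by norm_num) hn0).2 hn
  have hj1 : J₁ ≤ j := le_trans (le_max_left _ _) hJj
  have hj2 : J₂ ≤ j := le_trans (le_max_right _ _) hJj
  set I := ∫ y, Ψ (2 ^ j) y ∂m with hI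
  have hIpos : 0 < I := hpos _
  -- not in exceptional set
  have hexc := hJ₁ j hj1
  rw [excSet, Set.mem_setOf_eq, not_le] at hexc
  have hA : birkhoffAvg T (Ψ (2 ^ j)) (2 ^ (j + 1)) x ≤ 3 / 2 * I := by
    have := (abs_sub_lt_iff.1 hexc).1
    linarith
  -- sums
  set Sn := ∑ k ∈ Finset.Icc 1 n, Ψ n (T^[k] x) with hSn
  set S := ∑ k ∈ Finset.Icc 1 (2 ^ (j + 1)), Ψ (2 ^ j) (T^[k] x) with hS
  have hS0 : 0 ≤ S := Finset.sum_nonneg fun k _ => hnonneg _ _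
  have hSnS : Sn ≤ S := by
    calc Sn ≤ ∑ k ∈ Finset.Icc 1 n, Ψ (2 ^ j) (T^[k] x) :=
          Finset.sum_le_sum fun k _ => hanti _ h1
      _ ≤ S := Finset.sum_le_sum_of_subset_of_nonneg
          (Finset.Icc_subset_Icc_right h2.le) fun k _ _ => hnonneg _ _
  have hApos : birkhoffAvg T (Ψ (2 ^ j)) (2 ^ (j + 1)) x = (1 / (2 ^ (j + 1) : ℝ)) * S := by
    rw [birkhoffAvg]; push_cast; ring
  have hnR : (0:ℝ) < n := by exact_mod_cast Nat.pos_of_ne_zero hn0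
  have hPn : (2:ℝ) ^ (j + 1) ≤ 2 * n := by
    have : (2:ℝ) ^ j ≤ n := by exact_mod_cast h1
    rw [pow_succ]; linarith
  have hP0 : (0:ℝ) < 2 ^ (j + 1) := by positivity
  -- main chain
  have key : birkhoffAvg T (Ψ n) n x ≤ 3 * I := by
    rw [birkhoffAvg, ← hSn]
    have hstep : (1 / (n:ℝ)) * Sn ≤ (1 / (2 ^ (j + 1) : ℝ)) * (2 * S) := by
      rw [div_mul_eq_mul_div, div_mul_eq_mul_div, div_le_div_iff₀ hnR hP0]
      have hSn0 : 0 ≤ Sn := Finset.sum_nonneg fun k _ => hnonneg _ _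
      nlinarith [mul_le_mul_of_nonneg_left hPn hSn0]
    calc (1 / (n:ℝ)) * Sn ≤ (1 / (2 ^ (j + 1) : ℝ)) * (2 * S) := hstep
      _ = 2 * ((1 / (2 ^ (j + 1) : ℝ)) * S) := by ring
      _ ≤ 2 * (3 / 2 * I) := by
          have := hA; rw [hApos] at this; linarith
      _ = 3 * I := by ring
  have hcompj : I ≤ C * ∫ y, Ψ (2 ^ (j + 1)) y ∂m := hJ₂ j hj2
  have hmono : ∫ y, Ψ (2 ^ (j + 1)) y ∂m ≤ ∫ y, Ψ n y ∂m := hIm _ _ h2.le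
  have hnpos' : 0 < ∫ y, Ψ n y ∂m := hpos n
  nlinarith [hpos n]
end

section
/- (Eventually always hitting; conditional form of Theorem 4.5.) Let (B_n)_{n ≥ 1} be a family of shrinking targets (indexed by positive integers). Suppose there is a constant C > 0 such that for all integers n ≥ 1 and N ≥ 1, m(𝒞^o_{N,B_n}) ≤ C (1 + |log m(B_n)|)/(N · m(B_n)). If there is a strictly increasing sequence (n_j) of positive integers with Σ_{j ≥ 2} (1 + |log m(B_{n_j})|)/(n_{j−1} · m(B_{n_j})) < ∞, then for m-almost every x ∈ X there is N(x) such that for every n ≥ N(x) there exists an integer 1 ≤ k ≤ n with T^k x ∈ B_n. -/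
open MeasureTheory Filter Set

/-- (Eventually always hitting; conditional form of Theorem
4.5.) Let `(B_n)` be a family of shrinking targets in a probability-preserving
system, and suppose there is `C > 0` such that for all `n, N ≥ 1`,
`m(𝒞^o_{N,B_n}) ≤ C (1 + |log m(B_n)|)/(N m(B_n))`, where
`𝒞^o_{N,B} = {x : T^k x ∉ B for all 1 ≤ k ≤ N}`. If there is a strictly
increasing sequence `(n_j)` of positive integers with
`Σ_j (1 + |log m(B_{n_{j+1}})|)/(n_j · m(B_{n_{j+1}})) < ∞`, then for `m`-a.e.
`x`, for all sufficiently large `n` there exists `1 ≤ k ≤ n` with `T^k x ∈ B_n`. -/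
theorem eventually_always_hitting
    {X : Type*} [MeasurableSpace X] (m : Measure X) [IsProbabilityMeasure m]
    (T : X → X) (hT : MeasurePreserving T m m)
    (B : ℕ → Set X) (hBmeas : ∀ n, MeasurableSet (B n))
    (hnested : ∀ k n : ℕ, k ≤ n → B n ⊆ B k)
    (hBpos : ∀ n, 0 < m (B n))
    (hBto0 : Tendsto (fun n => m (B n)) atTop (nhds 0))
    (C : ℝ) (hC : 0 < C)
    (hCo : ∀ n N : ℕ, 1 ≤ n → 1 ≤ N →
      (m {x | ∀ k : ℕ, 1 ≤ k → k ≤ N → T^[k] x ∉ B n}).toReal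
        ≤ C * (1 + |Real.log (m (B n)).toReal|) / ((N : ℝ) * (m (B n)).toReal))
    (nseq : ℕ → ℕ) (hmono : StrictMono nseq) (hpos : ∀ j, 1 ≤ nseq j)
    (hsum : Summable (fun j : ℕ =>
      (1 + |Real.log (m (B (nseq (j + 1)))).toReal|)
        / ((nseq j : ℝ) * (m (B (nseq (j + 1)))).toReal))) :
    ∀ᵐ x ∂m, ∃ N : ℕ, ∀ n, N ≤ n → ∃ k : ℕ, 1 ≤ k ∧ k ≤ n ∧ T^[k] x ∈ B n := by
  set A : ℕ → Set X := fun j =>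
    {x | ∀ k : ℕ, 1 ≤ k → k ≤ nseq j → T^[k] x ∉ B (nseq (j + 1))} with hA
  set f : ℕ → ℝ := fun j =>
    (1 + |Real.log (m (B (nseq (j + 1)))).toReal|)
      / ((nseq j : ℝ) * (m (B (nseq (j + 1)))).toReal) with hf
  have hf0 : ∀ j, 0 ≤ f j := by
    intro j
    apply div_nonneg
    · positivity
    · have := (hBpos (nseq (j+1)))
      have h1 : 0 ≤ (m (B (nseq (j+1)))).toReal := ENNReal.toReal_nonneg
      positivity
  have hbound : ∀ j, m (A j) ≤ ENNReal.ofReal (C * f j) := by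
    intro j
    have h1 := hCo (nseq (j + 1)) (nseq j) (hpos _) (hpos _)
    have hfin : m (A j) ≠ ⊤ := measure_ne_top m _
    rw [← ENNReal.ofReal_toReal hfin]
    apply ENNReal.ofReal_le_ofReal
    calc (m (A j)).toReal ≤ _ := h1
      _ = C * f j := by rw [hf]; ring
  have hsumC : Summable (fun j => C * f j) := hsum.mul_left C
  have htsum : ∑' j, m (A j) ≠ ⊤ := by
    apply ne_top_of_le_ne_top (b := ∑' j, ENNReal.ofReal (C * f j))
    · rw [← ENNReal.ofReal_tsum_of_nonneg (fun j => by positivity) hsumC]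
      exact ENNReal.ofReal_ne_top
    · exact ENNReal.tsum_le_tsum hbound
  have hlimsup : m (limsup A atTop) = 0 := measure_limsup_atTop_eq_zero htsum
  have hae : ∀ᵐ x ∂m, x ∉ limsup A atTop := by
    rw [ae_iff]; simpa using hlimsup
  filter_upwards [hae] with x hx
  rw [mem_limsup_iff_frequently_mem, Filter.not_frequently] at hx
  rw [Filter.eventually_atTop] at hx
  obtain ⟨J, hJ⟩ := hx
  refine ⟨nseq J, fun n hn => ?_⟩
  -- find largest j with nseq j ≤ n
  have hex : ∃ j, n < nseq j := by
    refine ⟨n + 1, ?_⟩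
    have : n + 1 ≤ nseq (n + 1) := hmono.le_apply
    omega
  classical
  have hj0lt : n < nseq (Nat.find hex) := Nat.find_spec hex
  have hJlt : J < Nat.find hex := by
    by_contra h
    push_neg at h
    have := hmono.monotone h
    omega
  obtain ⟨j, hj⟩ : ∃ j, Nat.find hex = j + 1 := ⟨Nat.find hex - 1, by omega⟩
  rw [hj] at hj0lt
  have hjle : nseq j ≤ n := by
    have := Nat.find_min hex (m := j) (by omega)
    omega
  have hJj : J ≤ j := by omega
  obtain ⟨k, hk1, hk2, hk3⟩ := by
    have := hJ j hJj
    simp only [hA, Set.mem_setOf_eq] at this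
    push_neg at this
    exact this
  exact ⟨k, hk1, le_trans hk2 hjle, hnested n (nseq (j + 1)) (le_of_lt hj0lt) hk3⟩
end

section
/- (Quantitative hitting asymptotics; conditional form of Theorem 4.6.) Let (B_n)_{n ≥ 1} be a family of shrinking targets (indexed by positive integers), and suppose there is C₀ ≥ 1 with m(B_n) ≤ C₀ · m(B_{2n}) for all n. Suppose there exist a constant c ≥ 1 and measurable functions Ψ_n^−, Ψ_n^+ with 0 ≤ Ψ_n^− ≤ 1_{B_n} ≤ Ψ_n^+ ≤ c, m(B_n) ≤ c · m(Ψ_n^−), m(Ψ_n^+) ≤ c · m(B_n), together with a constant C > 0 such that for all integers n, N ≥ 1: m(𝒞_{N,Ψ_n^−}) ≤ C (1 + |log m(B_n)|)/(N · m(B_n)) and m(𝒞_{N,Ψ_n^+}) ≤ C (1 + |log m(B_n)|)/(N · m(B_n)). If Σ_j (1 + |log m(B_{2^j})|)/(2^j · m(B_{2^j})) < ∞, then there are constants c₁, c₂ > 0 (depending only on c and C₀) such that for m-almost every x ∈ X, for all sufficiently large n: c₁ · n · m(B_n) ≤ #{1 ≤ k ≤ n : T^k x ∈ B_n} ≤ c₂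 · n · m(B_n). -/
open MeasureTheory Filter Set

private lemma sum_eq_mul_birkhoffAvg {X : Type*} (T : X → X) (Ψ : X → ℝ) (N : ℕ)
    (hN : N ≠ 0) (x : X) :
    ∑ k ∈ Finset.Icc 1 N, Ψ (T^[k] x) = (N : ℝ) * birkhoffAvg T Ψ N x := by
  have hN' : (N : ℝ) ≠ 0 := Nat.cast_ne_zero.2 hN
  simp only [birkhoffAvg]
  field_simp


/-- (Quantitative hitting asymptotics; conditional form of
Theorem 4.6.) Given `c ≥ 1` and `C₀ ≥ 1` there are constants `c₁, c₂ > 0`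
(depending only on `c` and `C₀`) such that: for any probability-preserving
system `(X, m, T)`, any family of shrinking targets `(B_n)` with
`m(B_n) ≤ C₀ m(B_{2n})`, any regular approximations `0 ≤ Ψ_n^− ≤ 1_{B_n} ≤
Ψ_n^+ ≤ c` with `m(B_n) ≤ c m(Ψ_n^−)`, `m(Ψ_n^+) ≤ c m(B_n)`, and constant
`C > 0` such that `m(𝒞_{N,Ψ_n^±}) ≤ C (1 + |log m(B_n)|)/(N m(B_n))` for all
`n, N ≥ 1`, if `Σ_j (1 + |log m(B_{2^j})|)/(2^j m(B_{2^j})) < ∞`, then for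
`m`-a.e. `x`, for all sufficiently large `n`:
`c₁ n m(B_n) ≤ #{1 ≤ k ≤ n : T^k x ∈ B_n} ≤ c₂ n m(B_n)`
(the counting function written as a sum of indicators). -/
theorem quantitative_hitting_asymptotics (c C₀ : ℝ) (hc : 1 ≤ c) (hC₀ : 1 ≤ C₀) :
    ∃ c₁ : ℝ, 0 < c₁ ∧ ∃ c₂ : ℝ, 0 < c₂ ∧
      ∀ (X : Type) [MeasurableSpace X] (m : Measure X) [IsProbabilityMeasure m]
        (T : X → X), MeasurePreserving T m m →
      ∀ (B : ℕ → Set X), (∀ n, MeasurableSet (B n)) →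
        (∀ k n : ℕ, k ≤ n → B n ⊆ B k) →
        (∀ n, 0 < m (B n)) →
        Tendsto (fun n => m (B n)) atTop (nhds 0) →
        (∀ n : ℕ, (m (B n)).toReal ≤ C₀ * (m (B (2 * n))).toReal) →
      ∀ (Ψm Ψp : ℕ → X → ℝ), (∀ n, Measurable (Ψm n)) → (∀ n, Measurable (Ψp n)) →
        (∀ n x, 0 ≤ Ψm n x) →
        (∀ n x, Ψm n x ≤ (B n).indicator (fun _ => (1 : ℝ)) x) →
        (∀ n x, (B n).indicator (fun _ => (1 : ℝ)) x ≤ Ψp n x) →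
        (∀ n x, Ψp n x ≤ c) →
        (∀ n, (m (B n)).toReal ≤ c * ∫ x, Ψm n x ∂m) →
        (∀ n, (∫ x, Ψp n x ∂m) ≤ c * (m (B n)).toReal) →
      ∀ C : ℝ, 0 < C →
        (∀ n N : ℕ, 1 ≤ n → 1 ≤ N →
          (m (excSet m T (Ψm n) N)).toReal
            ≤ C * (1 + |Real.log (m (B n)).toReal|) / ((N : ℝ) * (m (B n)).toReal)) →
        (∀ n N : ℕ, 1 ≤ n → 1 ≤ N →
          (m (excSet m T (Ψp n) N)).toReal
            ≤ C * (1 + |Real.log (m (B n)).toReal|) / ((N : ℝ) * (m (B n)).toReal)) →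
      Summable (fun j : ℕ =>
        (1 + |Real.log (m (B (2 ^ j))).toReal|) / ((2 ^ j : ℝ) * (m (B (2 ^ j))).toReal)) →
      ∀ᵐ x ∂m, ∃ N : ℕ, ∀ n, N ≤ n →
        c₁ * n * (m (B n)).toReal
            ≤ (∑ k ∈ Finset.Icc 1 n, (B n).indicator (fun _ => (1 : ℝ)) (T^[k] x))
          ∧ (∑ k ∈ Finset.Icc 1 n, (B n).indicator (fun _ => (1 : ℝ)) (T^[k] x))
            ≤ c₂ * n * (m (B n)).toReal := by
  have hc0 : (0:ℝ) < c := lt_of_lt_of_le one_pos hc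
  have hC₀0 : (0:ℝ) < C₀ := lt_of_lt_of_le one_pos hC₀
  refine ⟨1/(4*c*C₀), by positivity, 3*c*C₀, by positivity, ?_⟩
  intro X _ m _ T _hT B _hBmeas hBnest hBpos _hBtend hdoub Ψm Ψp _hΨmM _hΨpM hΨm0 hΨmle hΨple _hΨpc hintm hintp C hC hexcm hexcp hsum
  have hMpos : ∀ n : ℕ, 0 < (m (B n)).toReal :=
    fun n => ENNReal.toReal_pos (hBpos n).ne' (measure_ne_top m _)
  have hMmono : ∀ {k n : ℕ}, k ≤ n → (m (B n)).toReal ≤ (m (B k)).toReal :=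
    fun {k n} h => ENNReal.toReal_mono (measure_ne_top m _) (measure_mono (hBnest k n h))
  have hone : ∀ j : ℕ, 1 ≤ 2 ^ j := fun j => Nat.one_le_two_pow
  set E : ℕ → Set X := fun j =>
    excSet m T (Ψm (2 ^ (j+1))) (2 ^ j) ∪ excSet m T (Ψp (2 ^ j)) (2 ^ (j+1)) with hE
  -- the two summable bounding sequences
  have hb1 : Summable (fun j : ℕ =>
      C * (1 + |Real.log (m (B (2 ^ (j+1)))).toReal|)
        / ((((2:ℕ) ^ j : ℕ) : ℝ) * (m (B (2 ^ (j+1)))).toReal)) := by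
    have h1 : Summable (fun j : ℕ => (2*C) *
        ((1 + |Real.log (m (B (2 ^ (j+1)))).toReal|)
          / ((2 ^ (j+1) : ℝ) * (m (B (2 ^ (j+1)))).toReal))) :=
      ((_root_.summable_nat_add_iff 1).2 hsum).mul_left (2*C)
    refine h1.congr fun j => ?_
    have hMe : (m (B (2 ^ (j+1)))).toReal ≠ 0 := (hMpos _).ne'
    have h2j : ((2:ℝ) ^ j) ≠ 0 := by positivity
    have hcast : ((((2:ℕ) ^ j : ℕ)) : ℝ) = (2:ℝ) ^ j := by push_cast; ring
    rw [hcast]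
    have h2 : ((2:ℝ) ^ (j+1)) = 2 * 2 ^ j := by ring
    rw [h2]
    field_simp
  have hb2 : Summable (fun j : ℕ =>
      C * (1 + |Real.log (m (B (2 ^ j))).toReal|)
        / ((((2:ℕ) ^ (j+1) : ℕ) : ℝ) * (m (B (2 ^ j))).toReal)) := by
    have h1 : Summable (fun j : ℕ => (C/2) *
        ((1 + |Real.log (m (B (2 ^ j))).toReal|)
          / ((2 ^ j : ℝ) * (m (B (2 ^ j))).toReal))) := hsum.mul_left (C/2)
    refine h1.congr fun j => ?_
    have hMe : (m (B (2 ^ j))).toReal ≠ 0 := (hMpos _).ne'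
    have h2j : ((2:ℝ) ^ j) ≠ 0 := by positivity
    have hcast : ((((2:ℕ) ^ (j+1) : ℕ)) : ℝ) = 2 * (2:ℝ) ^ j := by push_cast; ring
    rw [hcast]
    field_simp
  have hnn1 : ∀ j : ℕ, 0 ≤ C * (1 + |Real.log (m (B (2 ^ (j+1)))).toReal|)
        / ((((2:ℕ) ^ j : ℕ) : ℝ) * (m (B (2 ^ (j+1)))).toReal) := by
    intro j
    refine div_nonneg (mul_nonneg hC.le (by positivity)) ?_
    exact mul_nonneg (Nat.cast_nonneg _) ENNReal.toReal_nonneg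
  have hnn2 : ∀ j : ℕ, 0 ≤ C * (1 + |Real.log (m (B (2 ^ j))).toReal|)
        / ((((2:ℕ) ^ (j+1) : ℕ) : ℝ) * (m (B (2 ^ j))).toReal) := by
    intro j
    refine div_nonneg (mul_nonneg hC.le (by positivity)) ?_
    exact mul_nonneg (Nat.cast_nonneg _) ENNReal.toReal_nonneg
  have key : ∀ j : ℕ, m (E j) ≤
      ENNReal.ofReal (C * (1 + |Real.log (m (B (2 ^ (j+1)))).toReal|)
        / ((((2:ℕ) ^ j : ℕ) : ℝ) * (m (B (2 ^ (j+1)))).toReal))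
      + ENNReal.ofReal (C * (1 + |Real.log (m (B (2 ^ j))).toReal|)
        / ((((2:ℕ) ^ (j+1) : ℕ) : ℝ) * (m (B (2 ^ j))).toReal)) := by
    intro j
    refine (measure_union_le _ _).trans (add_le_add ?_ ?_)
    · exact (ENNReal.le_ofReal_iff_toReal_le (measure_ne_top m _) (hnn1 j)).2
        (hexcm (2^(j+1)) (2^j) (hone _) (hone _))
    · exact (ENNReal.le_ofReal_iff_toReal_le (measure_ne_top m _) (hnn2 j)).2
        (hexcp (2^j) (2^(j+1)) (hone _) (hone _))
  have htsum : (∑' j, m (E j)) ≠ ⊤ := by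
    refine ne_top_of_le_ne_top ?_ (ENNReal.tsum_le_tsum key)
    rw [ENNReal.tsum_add, ← ENNReal.ofReal_tsum_of_nonneg hnn1 hb1,
      ← ENNReal.ofReal_tsum_of_nonneg hnn2 hb2]
    exact ENNReal.add_ne_top.2 ⟨ENNReal.ofReal_ne_top, ENNReal.ofReal_ne_top⟩
  filter_upwards [ae_eventually_notMem htsum] with x hx
  obtain ⟨J, hJ⟩ := eventually_atTop.1 hx
  refine ⟨2 ^ J, fun n hn => ?_⟩
  have hn1 : 1 ≤ n := le_trans (hone J) hn
  set j := Nat.log 2 n with hjdef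
  have hjn : 2 ^ j ≤ n := Nat.pow_log_le_self 2 (by omega)
  have hnj : n < 2 ^ (j+1) := Nat.lt_pow_succ_log_self (by norm_num) n
  have hnj2 : n ≤ 2 ^ (j+1) := hnj.le
  have hJj : J ≤ j := (Nat.le_log_iff_pow_le (by norm_num) (by omega)).2 hn
  have hxE := hJ j hJj
  have hxm : x ∉ excSet m T (Ψm (2 ^ (j+1))) (2 ^ j) := fun h => hxE (Set.mem_union_left _ h)
  have hxp : x ∉ excSet m T (Ψp (2 ^ j)) (2 ^ (j+1)) := fun h => hxE (Set.mem_union_right _ h)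
  simp only [excSet, Set.mem_setOf_eq, not_le] at hxm hxp
  have habsm := abs_lt.1 hxm
  have habsp := abs_lt.1 hxp
  have havgm : (∫ y, Ψm (2^(j+1)) y ∂m) / 2 < birkhoffAvg T (Ψm (2^(j+1))) (2^j) x := by
    linarith [habsm.1]
  have havgp : birkhoffAvg T (Ψp (2^j)) (2^(j+1)) x < 3 * (∫ y, Ψp (2^j) y ∂m) / 2 := by
    linarith [habsp.2]
  set S := ∑ k ∈ Finset.Icc 1 n, (B n).indicator (fun _ => (1:ℝ)) (T^[k] x) with hSdef
  constructor
  · -- lower bound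
    have hS_lower : ((2^j : ℕ) : ℝ) * birkhoffAvg T (Ψm (2^(j+1))) (2^j) x ≤ S := by
      rw [← sum_eq_mul_birkhoffAvg T _ _ (Nat.two_pow_pos j).ne' x, hSdef]
      refine le_trans (Finset.sum_le_sum fun k _ => ?_)
        (Finset.sum_le_sum_of_subset_of_nonneg (Finset.Icc_subset_Icc le_rfl hjn)
          fun i _ _ => Set.indicator_nonneg (fun _ _ => zero_le_one) _)
      exact le_trans (hΨmle _ _)
        (Set.indicator_le_indicator_of_subset (hBnest n (2^(j+1)) hnj2)
          (fun _ => zero_le_one) _)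
    have hImlb : (m (B (2^(j+1)))).toReal ≤ (∫ y, Ψm (2^(j+1)) y ∂m) * c := by
      have := hintm (2^(j+1)); linarith
    have h2n : 2 ^ (j+1) ≤ 2 * n := by rw [pow_succ]; omega
    have hB2n : (m (B (2*n))).toReal ≤ (m (B (2^(j+1)))).toReal := hMmono h2n
    have hMn : (m (B n)).toReal ≤ C₀ * (m (B (2*n))).toReal := hdoub n
    have hstep : (m (B n)).toReal / (2*c*C₀) ≤ (∫ y, Ψm (2^(j+1)) y ∂m) / 2 := by
      rw [div_le_div_iff₀ (by positivity) (by norm_num)]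
      have h1 : C₀ * (m (B (2*n))).toReal ≤ C₀ * (m (B (2^(j+1)))).toReal :=
        mul_le_mul_of_nonneg_left hB2n hC₀0.le
      have h2 : C₀ * (m (B (2^(j+1)))).toReal ≤ C₀ * ((∫ y, Ψm (2^(j+1)) y ∂m) * c) :=
        mul_le_mul_of_nonneg_left hImlb hC₀0.le
      nlinarith
    have h2 : ((2^j : ℕ) : ℝ) * ((m (B n)).toReal / (2*c*C₀)) ≤ S :=
      le_trans (mul_le_mul_of_nonneg_left (hstep.trans havgm.le) (Nat.cast_nonneg _)) hS_lower
    have hn2 : (n : ℝ) ≤ 2 * ((2^j : ℕ) : ℝ) := by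
      have h : n ≤ 2 * 2 ^ j := by have := hnj; rw [pow_succ] at this; omega
      calc (n:ℝ) ≤ ((2 * 2^j : ℕ) : ℝ) := Nat.cast_le.2 h
        _ = 2 * ((2^j:ℕ):ℝ) := by push_cast; ring
    calc 1/(4*c*C₀) * n * (m (B n)).toReal
        = ((n:ℝ)/2) * ((m (B n)).toReal / (2*c*C₀)) := by
          field_simp; ring_nf; try exact Or.inl trivial
      _ ≤ ((2^j:ℕ):ℝ) * ((m (B n)).toReal / (2*c*C₀)) := by
          refine mul_le_mul_of_nonneg_right (by linarith) ?_
          exact div_nonneg ENNReal.toReal_nonneg (by positivity)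
      _ ≤ S := h2
  · -- upper bound
    have hS_upper : S ≤ ((2^(j+1) : ℕ) : ℝ) * birkhoffAvg T (Ψp (2^j)) (2^(j+1)) x := by
      rw [← sum_eq_mul_birkhoffAvg T _ _ (Nat.two_pow_pos (j+1)).ne' x, hSdef]
      refine le_trans (Finset.sum_le_sum fun k _ => ?_)
        (Finset.sum_le_sum_of_subset_of_nonneg (Finset.Icc_subset_Icc le_rfl hnj2)
          fun i _ _ => le_trans (Set.indicator_nonneg (fun _ _ => zero_le_one) _) (hΨple _ _))
      exact le_trans (Set.indicator_le_indicator_of_subset (hBnest (2^j) n hjn)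
        (fun _ => zero_le_one) _) (hΨple _ _)
    have e2 : (∫ y, Ψp (2^j) y ∂m) ≤ c * (m (B (2^j))).toReal := hintp (2^j)
    have h2pow : 2 * 2 ^ j = 2 ^ (j+1) := by rw [pow_succ]; ring
    have e3 : (m (B (2^j))).toReal ≤ C₀ * (m (B n)).toReal := by
      have hd := hdoub (2^j)
      rw [h2pow] at hd
      exact hd.trans (mul_le_mul_of_nonneg_left (hMmono hnj2) hC₀0.le)
    have e3' : c * (m (B (2^j))).toReal ≤ c * (C₀ * (m (B n)).toReal) :=
      mul_le_mul_of_nonneg_left e3 hc0.le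
    have e4 : ((2^(j+1) : ℕ) : ℝ) ≤ 2 * n := by
      have h : 2^(j+1) ≤ 2 * n := by rw [pow_succ]; omega
      calc ((2^(j+1):ℕ):ℝ) ≤ ((2*n : ℕ):ℝ) := Nat.cast_le.2 h
        _ = 2 * (n:ℝ) := by push_cast; ring
    have hQnn : 0 ≤ 3 * (c * (C₀ * (m (B n)).toReal)) / 2 := by
      have := mul_nonneg hc0.le (mul_nonneg hC₀0.le (ENNReal.toReal_nonneg
        (a := m (B n))))
      linarith
    calc S ≤ ((2^(j+1):ℕ):ℝ) * birkhoffAvg T (Ψp (2^j)) (2^(j+1)) x := hS_upper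
      _ ≤ ((2^(j+1):ℕ):ℝ) * (3 * (c * (C₀ * (m (B n)).toReal)) / 2) := by
          refine mul_le_mul_of_nonneg_left ?_ (Nat.cast_nonneg _)
          linarith
      _ ≤ (2 * (n:ℝ)) * (3 * (c * (C₀ * (m (B n)).toReal)) / 2) :=
          mul_le_mul_of_nonneg_right e4 hQnn
      _ = 3*c*C₀ * n * (m (B n)).toReal := by ring
end

section
/- (Easy direction of the logarithm law for the first hitting time.) Let (B_t)_{t ≥ 1} be a family of shrinking targets indexed by real t ≥ 1. Then for m-almost every x ∈ X: for every ε ∈ (0,1) there is t₀(x,ε) such that τ_{B_t}(x) ≥ m(B_t)^{−(1−ε)} for all t ≥ t₀; in particular liminf_{t→∞} log τ_{B_t}(x) / (−log m(B_t)) ≥ 1. -/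
open MeasureTheory Filter Set

open scoped ENNReal
lemma easy_core
    {X : Type*} [MeasurableSpace X] (m : Measure X) [IsProbabilityMeasure m]
    (T : X → X) (hT : MeasurePreserving T m m)
    (B : ℝ → Set X)
    (hBmeas : ∀ t : ℝ, 1 ≤ t → MeasurableSet (B t))
    (hnested : ∀ s t : ℝ, 1 ≤ s → s ≤ t → B t ⊆ B s)
    (hBpos : ∀ t : ℝ, 1 ≤ t → 0 < m (B t))
    (hBto0 : Tendsto (fun t => m (B t)) atTop (nhds 0))
    (ε : ℝ) (hε0 : 0 < ε) (hε1 : ε < 1) :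
    ∀ᵐ x ∂m, ∃ t₀ : ℝ, ∀ t : ℝ, 1 ≤ t → t₀ ≤ t →
      ∀ k : ℕ, 1 ≤ k → T^[k] x ∈ B t →
        ((m (B t)).toReal) ^ (-(1 - ε)) ≤ (k : ℝ) := by
  -- the sets S n of parameters whose target has measure ≤ 2⁻¹ ^ n
  set S : ℕ → Set ℝ := fun n => {t : ℝ | 1 ≤ t ∧ m (B t) ≤ 2⁻¹ ^ n} with hS
  have hpow_pos : ∀ n : ℕ, (0:ℝ≥0∞) < 2⁻¹ ^ n :=
    fun n => ENNReal.pow_pos (ENNReal.inv_pos.mpr ENNReal.ofNat_ne_top) n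
  have hSne : ∀ n, (S n).Nonempty := by
    intro n
    obtain ⟨a, ha⟩ := eventually_atTop.mp (hBto0.eventually_lt_const (hpow_pos n))
    exact ⟨max a 1, le_max_right _ _, (ha _ (le_max_left _ _)).le⟩
  have hSbdd : ∀ n, BddBelow (S n) := fun n => ⟨1, fun t ht => ht.1⟩
  have hSup : ∀ n, ∀ t ∈ S n, ∀ t', t ≤ t' → t' ∈ S n := by
    intro n t ht t' htt'
    exact ⟨ht.1.trans htt', le_trans (measure_mono (hnested t t' ht.1 htt')) ht.2⟩
  set c : ℕ → ℝ := fun n => sInf (S n) with hc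
  have hc1 : ∀ n, 1 ≤ c n := fun n => le_csInf (hSne n) (fun t ht => ht.1)
  -- choice of approximating parameters
  have hP : ∀ n k : ℕ, ∃ s, s ∈ S n ∧ s ≤ c n + 1 / (k + 1) ∧ (c n ∈ S n → s = c n) := by
    intro n k
    by_cases hcn : c n ∈ S n
    · exact ⟨c n, hcn, le_add_of_nonneg_right (by positivity), fun _ => rfl⟩
    · obtain ⟨a, ha, halt⟩ := Real.lt_sInf_add_pos (hSne n)
        (show (0:ℝ) < 1 / (k + 1) by positivity)
      exact ⟨a, ha, halt.le, fun h => absurd h hcn⟩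
  set sf : ℕ → ℕ → ℝ := fun n k => (hP n k).choose with hsf
  have hsfS : ∀ n k, sf n k ∈ S n := fun n k => (hP n k).choose_spec.1
  have hsf1 : ∀ n k, 1 ≤ sf n k := fun n k => (hsfS n k).1
  -- the enlarged targets C n
  set C : ℕ → Set X := fun n => ⋃ k : ℕ, B (sf n k) with hC
  have hCmeas : ∀ n, MeasurableSet (C n) :=
    fun n => MeasurableSet.iUnion fun k => hBmeas _ (hsf1 n k)
  have hCm : ∀ n, m (C n) ≤ 2⁻¹ ^ n := by
    intro n
    have hdir : Directed (· ⊆ ·) (fun k => B (sf n k)) := by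
      intro k₁ k₂
      rcases le_total (sf n k₁) (sf n k₂) with h | h
      · exact ⟨k₁, subset_rfl, hnested _ _ (hsf1 n k₁) h⟩
      · exact ⟨k₂, hnested _ _ (hsf1 n k₂) h, subset_rfl⟩
    rw [hC, hdir.measure_iUnion]
    exact iSup_le fun k => (hsfS n k).2
  have hsub : ∀ n, ∀ t ∈ S n, B t ⊆ C n := by
    intro n t ht
    by_cases hcn : c n ∈ S n
    · have h0 : sf n 0 = c n := (hP n 0).choose_spec.2.2 hcn
      have : B t ⊆ B (sf n 0) := hnested _ _ (hsf1 n 0) (h0 ▸ csInf_le (hSbdd n) ht)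
      exact this.trans (subset_iUnion (fun k => B (sf n k)) 0)
    · have hlt : c n < t := lt_of_le_of_ne (csInf_le (hSbdd n) ht)
        (fun h => hcn (h ▸ ht))
      obtain ⟨k, hk⟩ := exists_nat_one_div_lt (sub_pos.mpr hlt)
      have hle : sf n k ≤ t := by
        have := (hP n k).choose_spec.2.1
        linarith
      exact (hnested _ _ (hsf1 n k) hle).trans (subset_iUnion (fun k => B (sf n k)) k)
  -- the Borel-Cantelli sets
  set K : ℕ → ℕ := fun n => ⌈(2:ℝ) ^ (((n:ℝ) + 2) * (1 - ε))⌉₊ with hK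
  set E : ℕ → Set X := fun n => ⋃ k ∈ Finset.Icc 1 (K n), T^[k] ⁻¹' (C n) with hE
  have hEm : ∀ n, m (E n) ≤ (K n) * m (C n) := by
    intro n
    refine (measure_biUnion_finset_le _ _).trans ?_
    have : ∀ k ∈ Finset.Icc 1 (K n), m (T^[k] ⁻¹' (C n)) = m (C n) := by
      intro k _
      exact (hT.iterate k).measure_preimage (hCmeas n).nullMeasurableSet
    rw [Finset.sum_congr rfl this, Finset.sum_const, Nat.card_Icc]
    simp [nsmul_eq_mul]
  -- summability
  have h2R : (0:ℝ) < 2 := two_pos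
  set g : ℕ → ℝ := fun n => ((2:ℝ) ^ (((n:ℝ) + 2) * (1 - ε)) + 1) * (2⁻¹:ℝ) ^ n with hg
  have hgsum : Summable g := by
    have hr0 : (0:ℝ) ≤ (2:ℝ) ^ (-ε) := Real.rpow_nonneg (by norm_num) _
    have hr1 : (2:ℝ) ^ (-ε) < 1 :=
      Real.rpow_lt_one_of_one_lt_of_neg one_lt_two (neg_neg_iff_pos.mpr hε0)
    have heq : ∀ n : ℕ, g n = (2:ℝ) ^ ((2:ℝ) * (1 - ε)) * ((2:ℝ) ^ (-ε)) ^ n + (2⁻¹:ℝ) ^ n := by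
      intro n
      show ((2:ℝ) ^ (((n:ℝ) + 2) * (1 - ε)) + 1) * (2⁻¹:ℝ) ^ n = _
      have h1 : ((2:ℝ) ^ (-ε)) ^ n = (2:ℝ) ^ ((-ε) * n) := by
        rw [← Real.rpow_natCast ((2:ℝ) ^ (-ε)) n, ← Real.rpow_mul h2R.le]
      have h2 : ((2⁻¹:ℝ)) ^ n = (2:ℝ) ^ (-(n:ℝ)) := by
        rw [← Real.rpow_natCast (2⁻¹:ℝ) n, Real.inv_rpow h2R.le, ← Real.rpow_neg h2R.le]
      rw [add_mul, one_mul, h1, h2, ← Real.rpow_add h2R, ← Real.rpow_add h2R]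
      ring_nf
    refine Summable.congr ?_ (fun n => (heq n).symm)
    exact ((summable_geometric_of_lt_one hr0 hr1).mul_left _).add
      (summable_geometric_of_lt_one (by norm_num) (by norm_num))
  have hgnn : ∀ n, 0 ≤ g n := by
    intro n
    apply mul_nonneg
    · positivity
    · positivity
  have hEg : ∀ n, m (E n) ≤ ENNReal.ofReal (g n) := by
    intro n
    refine (hEm n).trans ?_
    have h1 : (K n : ℝ≥0∞) ≤ ENNReal.ofReal ((2:ℝ) ^ (((n:ℝ) + 2) * (1 - ε)) + 1) := by
      rw [← ENNReal.ofReal_natCast]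
      exact ENNReal.ofReal_le_ofReal
        (Nat.ceil_lt_add_one (Real.rpow_nonneg (by norm_num) _)).le
    have h2 : m (C n) ≤ ENNReal.ofReal ((2⁻¹:ℝ) ^ n) := by
      refine (hCm n).trans ?_
      rw [ENNReal.ofReal_pow (by norm_num)]
      gcongr
      rw [ENNReal.ofReal_inv_of_pos h2R]
      simp
    calc (K n : ℝ≥0∞) * m (C n)
        ≤ ENNReal.ofReal ((2:ℝ) ^ (((n:ℝ) + 2) * (1 - ε)) + 1) *
            ENNReal.ofReal ((2⁻¹:ℝ) ^ n) := by gcongr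
      _ = ENNReal.ofReal (g n) := by
          rw [hg, ← ENNReal.ofReal_mul (by positivity)]
  have hsum : ∑' n, m (E n) ≠ ⊤ := by
    refine ne_top_of_le_ne_top ?_ (ENNReal.tsum_le_tsum hEg)
    rw [← ENNReal.ofReal_tsum_of_nonneg hgnn hgsum]
    exact ENNReal.ofReal_ne_top
  -- Borel-Cantelli
  filter_upwards [ae_eventually_notMem hsum] with x hx
  obtain ⟨N, hN⟩ := eventually_atTop.mp hx
  obtain ⟨t₀, ht₀⟩ := eventually_atTop.mp (hBto0.eventually_lt_const (hpow_pos N))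
  refine ⟨t₀, fun t ht1 htt0 k hk hkB => ?_⟩
  have hμpos := hBpos t ht1
  have hμtop : m (B t) ≠ ⊤ := measure_ne_top m _
  have hμN : m (B t) ≤ 2⁻¹ ^ N := (ht₀ t htt0).le
  -- find the level n
  have hex : ∃ n : ℕ, 2⁻¹ ^ n < m (B t) := ENNReal.exists_inv_two_pow_lt hμpos.ne'
  set n₁ := Nat.find hex with hn₁
  have hn₁N : N < n₁ := by
    by_contra h
    push_neg at h
    have : (2⁻¹:ℝ≥0∞) ^ N ≤ 2⁻¹ ^ n₁ := pow_le_pow_of_le_one (by positivity) (by simp) h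
    exact absurd ((this.trans_lt (Nat.find_spec hex)).trans_le hμN) (lt_irrefl _)
  set n := n₁ - 1 with hn
  have hnN : N ≤ n := Nat.le_sub_one_of_lt hn₁N
  have hn1 : n + 1 = n₁ := by omega
  have hn_le : m (B t) ≤ 2⁻¹ ^ n := by
    have := Nat.find_min hex (show n < n₁ by omega)
    push_neg at this
    exact this
  have hn_lt : (2⁻¹:ℝ≥0∞) ^ (n + 1) < m (B t) := hn1 ▸ Nat.find_spec hex
  -- k must exceed K n
  have htS : t ∈ S n := ⟨ht1, hn_le⟩
  have hxC : T^[k] x ∈ C n := hsub n t htS hkB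
  have hKk : K n < k := by
    by_contra h
    push_neg at h
    refine hN n hnN ?_
    rw [hE]
    exact Set.mem_biUnion (Finset.mem_Icc.mpr ⟨hk, h⟩) hxC
  -- conclude
  have hb0 : (0:ℝ) < (2⁻¹:ℝ) ^ (n + 1) := by positivity
  have hb_lt : (2⁻¹:ℝ) ^ (n + 1) < (m (B t)).toReal := by
    rw [show ((2⁻¹:ℝ) ^ (n+1)) = ((2⁻¹ ^ (n+1) : ℝ≥0∞)).toReal by
      rw [ENNReal.toReal_pow, ENNReal.toReal_inv]; norm_num]
    exact (ENNReal.toReal_lt_toReal (by finiteness) hμtop).mpr hn_lt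
  have step1 : ((m (B t)).toReal) ^ (-(1 - ε)) ≤ ((2⁻¹:ℝ) ^ (n + 1)) ^ (-(1 - ε) : ℝ) :=
    Real.rpow_le_rpow_of_nonpos hb0 hb_lt.le (by linarith)
  have step2 : ((2⁻¹:ℝ) ^ (n + 1)) ^ (-(1 - ε) : ℝ) = (2:ℝ) ^ (((n:ℝ) + 1) * (1 - ε)) := by
    have h2 : ((2⁻¹:ℝ)) ^ (n+1) = (2:ℝ) ^ (-((n:ℝ)+1)) := by
      rw [← Real.rpow_natCast (2⁻¹:ℝ) (n+1), Real.inv_rpow h2R.le, ← Real.rpow_neg h2R.le]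
      push_cast
      ring_nf
    rw [h2, ← Real.rpow_mul h2R.le]
    ring_nf
  have step3 : (2:ℝ) ^ (((n:ℝ) + 1) * (1 - ε)) ≤ (2:ℝ) ^ (((n:ℝ) + 2) * (1 - ε)) :=
    Real.rpow_le_rpow_of_exponent_le one_le_two (by nlinarith)
  have step4 : (2:ℝ) ^ (((n:ℝ) + 2) * (1 - ε)) ≤ (K n : ℝ) := Nat.le_ceil _
  have step5 : (K n : ℝ) ≤ (k : ℝ) := by exact_mod_cast hKk.le
  calc ((m (B t)).toReal) ^ (-(1 - ε)) ≤ _ := step1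
    _ = _ := step2
    _ ≤ _ := step3
    _ ≤ _ := step4
    _ ≤ _ := step5


/-- (Easy direction of the logarithm law for the first hitting
time.) Let `(B_t)_{t ≥ 1}` be a family of shrinking targets in a
probability-preserving system. Then for `m`-a.e. `x`: for every `ε ∈ (0,1)` there
is `t₀` such that `τ_{B_t}(x) ≥ m(B_t)^{−(1−ε)}` for all `t ≥ t₀`; in particular
`liminf_{t→∞} log τ_{B_t}(x)/(−log m(B_t)) ≥ 1`.

The first hitting time `τ_{B_t}(x)` (possibly `∞`) is handled by quantifying over
all hitting times: `τ_{B_t}(x) ≥ a` iff every `k ≥ 1` with `T^k x ∈ B_t`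
satisfies `k ≥ a`, and since `τ` is the minimum of the hitting set,
`liminf log τ/(−log m(B_t)) ≥ 1` is expressed as: for every `r < 1`, eventually
in `t`, every hitting time `k` satisfies `log k/(−log m(B_t)) ≥ r` (vacuously
true when `τ_{B_t}(x) = ∞`). -/
theorem easy_direction_logarithm_law
    {X : Type*} [MeasurableSpace X] (m : Measure X) [IsProbabilityMeasure m]
    (T : X → X) (hT : MeasurePreserving T m m)
    (B : ℝ → Set X)
    (hBmeas : ∀ t : ℝ, 1 ≤ t → MeasurableSet (B t))
    (hnested : ∀ s t : ℝ, 1 ≤ s → s ≤ t → B t ⊆ B s)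
    (hBpos : ∀ t : ℝ, 1 ≤ t → 0 < m (B t))
    (hBto0 : Tendsto (fun t => m (B t)) atTop (nhds 0)) :
    ∀ᵐ x ∂m,
      (∀ ε : ℝ, 0 < ε → ε < 1 → ∃ t₀ : ℝ, ∀ t : ℝ, 1 ≤ t → t₀ ≤ t →
        ∀ k : ℕ, 1 ≤ k → T^[k] x ∈ B t →
          ((m (B t)).toReal) ^ (-(1 - ε)) ≤ (k : ℝ)) ∧
      (∀ r : ℝ, r < 1 → ∀ᶠ t : ℝ in atTop,
        ∀ k : ℕ, 1 ≤ k → T^[k] x ∈ B t →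
          r ≤ Real.log k / (-Real.log (m (B t)).toReal)) := by
  have hcore : ∀ᵐ x ∂m, ∀ j : ℕ, ∃ t₀ : ℝ, ∀ t : ℝ, 1 ≤ t → t₀ ≤ t →
      ∀ k : ℕ, 1 ≤ k → T^[k] x ∈ B t →
        ((m (B t)).toReal) ^ (-(1 - 1/((j:ℝ)+2))) ≤ (k : ℝ) := by
    rw [MeasureTheory.ae_all_iff]
    intro j
    exact easy_core m T hT B hBmeas hnested hBpos hBto0 (1/((j:ℝ)+2))
      (by positivity)
      (by rw [div_lt_one (by positivity)]; linarith [Nat.cast_nonneg (α := ℝ) j])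
  filter_upwards [hcore] with x hx
  have hbpos : ∀ t : ℝ, 1 ≤ t → 0 < (m (B t)).toReal := fun t ht =>
    ENNReal.toReal_pos (hBpos t ht).ne' (measure_ne_top m _)
  have hble : ∀ t : ℝ, 1 ≤ t → (m (B t)).toReal ≤ 1 := fun t ht => by
    have h1 := prob_le_one (μ := m) (s := B t)
    calc (m (B t)).toReal ≤ (1:ℝ≥0∞).toReal := ENNReal.toReal_mono (by finiteness) h1
      _ = 1 := by simp
  have part1 : ∀ ε : ℝ, 0 < ε → ε < 1 → ∃ t₀ : ℝ, ∀ t : ℝ, 1 ≤ t → t₀ ≤ t →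
      ∀ k : ℕ, 1 ≤ k → T^[k] x ∈ B t →
        ((m (B t)).toReal) ^ (-(1 - ε)) ≤ (k : ℝ) := by
    intro ε hε0 hε1
    obtain ⟨j, hj⟩ := exists_nat_ge (1/ε)
    have hjε : 1/((j:ℝ)+2) ≤ ε := by
      rw [div_le_iff₀ (by positivity)]
      rw [div_le_iff₀ hε0] at hj
      nlinarith
    obtain ⟨t₀, ht₀⟩ := hx j
    refine ⟨t₀, fun t ht1 htt0 k hk hkB => ?_⟩
    refine le_trans ?_ (ht₀ t ht1 htt0 k hk hkB)
    exact Real.rpow_le_rpow_of_exponent_ge (hbpos t ht1) (hble t ht1) (by linarith)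
  refine ⟨part1, fun r hr => ?_⟩
  rcases le_or_gt r 0 with hr0 | hr0
  · filter_upwards [eventually_ge_atTop (1:ℝ),
      hBto0.eventually_lt_const (zero_lt_one (α := ℝ≥0∞))] with t ht1 htlt k hk hkB
    have hb1 : (m (B t)).toReal < 1 := by
      have := (ENNReal.toReal_lt_toReal (measure_ne_top m _) ENNReal.one_ne_top).mpr htlt
      simpa using this
    have hlogb : 0 < -Real.log (m (B t)).toReal :=
      neg_pos.mpr (Real.log_neg (hbpos t ht1) hb1)
    have hlogk : 0 ≤ Real.log (k:ℝ) := Real.log_nonneg (by exact_mod_cast hk)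
    exact hr0.trans (div_nonneg hlogk hlogb.le)
  · obtain ⟨t₀, ht₀⟩ := part1 (1 - r) (by linarith) (by linarith)
    filter_upwards [eventually_ge_atTop (max t₀ 1),
      hBto0.eventually_lt_const (zero_lt_one (α := ℝ≥0∞))] with t ht htlt k hk hkB
    have ht1 : (1:ℝ) ≤ t := le_trans (le_max_right _ _) ht
    have htt0 : t₀ ≤ t := le_trans (le_max_left _ _) ht
    have hb1 : (m (B t)).toReal < 1 := by
      have := (ENNReal.toReal_lt_toReal (measure_ne_top m _) ENNReal.one_ne_top).mpr htlt
      simpa using this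
    have hb0 := hbpos t ht1
    have hlogb : 0 < -Real.log (m (B t)).toReal :=
      neg_pos.mpr (Real.log_neg hb0 hb1)
    have hkey := ht₀ t ht1 htt0 k hk hkB
    have hexp : -(1 - (1 - r)) = -r := by ring
    rw [hexp] at hkey
    have hrpow : (0:ℝ) < (m (B t)).toReal ^ (-r : ℝ) := Real.rpow_pos_of_pos hb0 _
    have hlog := Real.log_le_log hrpow hkey
    rw [Real.log_rpow hb0] at hlog
    rw [le_div_iff₀ hlogb]
    nlinarith [hlog]
end

section
/- (Logarithm law for the first hitting time; conditional form of Theorem 4.7.) Let (B_t)_{t ≥ 1} be a family of shrinking targets indexed by real t ≥ 1, and suppose there is a constant C > 0 such that for every t ≥ 1 and every integer N ≥ 1, m(𝒞^o_{N,B_t}) ≤ C (1 + |log m(B_t)|)/(N · m(B_t)). Then for m-almost every x ∈ X there is t₀(x) such that τ_{B_t}(x) < ∞ for all t ≥ t₀, and lim_{t→∞} log τ_{B_t}(x) / (−log m(B_t)) = 1. -/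
open MeasureTheory Filter Set Topology
open scoped ENNReal

private lemma measure_biUnion_le_mono' {X : Type*} [MeasurableSpace X] (m : Measure X)
    {I : Set ℝ} (hI : BddAbove I) (S : ℝ → Set X)
    (hmono : ∀ s ∈ I, ∀ t ∈ I, s ≤ t → S s ⊆ S t) {b : ℝ≥0∞}
    (hb : ∀ t ∈ I, m (S t) ≤ b) : m (⋃ t ∈ I, S t) ≤ b := by
  rcases I.eq_empty_or_nonempty with h | hne
  · simp [h]
  obtain ⟨u, hu_mono, hu_tend, hu_mem⟩ := exists_seq_tendsto_sSup hne hI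
  classical
  set v : ℕ → ℝ := fun n => if sSup I ∈ I then sSup I else u n with hv
  have hvI : ∀ n, v n ∈ I := by
    intro n; by_cases h : sSup I ∈ I <;> simp [hv, h, hu_mem n]
  have hsub : (⋃ t ∈ I, S t) ⊆ ⋃ n, S (v n) := by
    intro x hx
    rcases mem_iUnion₂.1 hx with ⟨t, htI, hxt⟩
    by_cases h : sSup I ∈ I
    · refine mem_iUnion.2 ⟨0, hmono t htI (v 0) (hvI 0) ?_ hxt⟩
      simp [hv, h, le_csSup hI htI]
    · have htlt : t < sSup I := lt_of_le_of_ne (le_csSup hI htI) fun he => h (he ▸ htI)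
      obtain ⟨n, hn⟩ := (hu_tend.eventually (eventually_gt_nhds htlt)).exists
      refine mem_iUnion.2 ⟨n, hmono t htI (v n) (hvI n) ?_ hxt⟩
      simp only [hv, if_neg h]
      exact hn.le
  have hdir : Directed (· ⊆ ·) fun n => S (v n) := by
    intro i j
    rcases le_total (v i) (v j) with h | h
    · exact ⟨j, hmono _ (hvI i) _ (hvI j) h, subset_rfl⟩
    · exact ⟨i, subset_rfl, hmono _ (hvI j) _ (hvI i) h⟩
  calc m (⋃ t ∈ I, S t) ≤ m (⋃ n, S (v n)) := measure_mono hsub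
    _ = ⨆ n, m (S (v n)) := hdir.measure_iUnion
    _ ≤ b := iSup_le fun n => hb _ (hvI n)

private lemma measure_biUnion_le_anti' {X : Type*} [MeasurableSpace X] (m : Measure X)
    {I : Set ℝ} (hI : BddBelow I) (S : ℝ → Set X)
    (hanti : ∀ s ∈ I, ∀ t ∈ I, s ≤ t → S t ⊆ S s) {b : ℝ≥0∞}
    (hb : ∀ t ∈ I, m (S t) ≤ b) : m (⋃ t ∈ I, S t) ≤ b := by
  rcases I.eq_empty_or_nonempty with h | hne
  · simp [h]
  obtain ⟨u, hu_anti, hu_tend, hu_mem⟩ := exists_seq_tendsto_sInf hne hI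
  classical
  set v : ℕ → ℝ := fun n => if sInf I ∈ I then sInf I else u n with hv
  have hvI : ∀ n, v n ∈ I := by
    intro n; by_cases h : sInf I ∈ I <;> simp [hv, h, hu_mem n]
  have hsub : (⋃ t ∈ I, S t) ⊆ ⋃ n, S (v n) := by
    intro x hx
    rcases mem_iUnion₂.1 hx with ⟨t, htI, hxt⟩
    by_cases h : sInf I ∈ I
    · refine mem_iUnion.2 ⟨0, hanti (v 0) (hvI 0) t htI ?_ hxt⟩
      simp [hv, h, csInf_le hI htI]
    · have htlt : sInf I < t := lt_of_le_of_ne (csInf_le hI htI) fun he => h (he ▸ htI)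
      obtain ⟨n, hn⟩ := (hu_tend.eventually (eventually_lt_nhds htlt)).exists
      refine mem_iUnion.2 ⟨n, hanti (v n) (hvI n) t htI ?_ hxt⟩
      simp only [hv, if_neg h]
      exact hn.le
  have hdir : Directed (· ⊆ ·) fun n => S (v n) := by
    intro i j
    rcases le_total (v i) (v j) with h | h
    · exact ⟨i, subset_rfl, hanti _ (hvI i) _ (hvI j) h⟩
    · exact ⟨j, hanti _ (hvI j) _ (hvI i) h, subset_rfl⟩
  calc m (⋃ t ∈ I, S t) ≤ m (⋃ n, S (v n)) := measure_mono hsub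
    _ = ⨆ n, m (S (v n)) := hdir.measure_iUnion
    _ ≤ b := iSup_le fun n => hb _ (hvI n)

private lemma log_law_arith1 {ε qk kk mmr : ℝ} (hε : 0 < ε)
    (h8m : 8 ≤ ε * (mmr+1)) (h8k : 8 ≤ ε * kk) (hk1 : 1 ≤ kk)
    (hq : qk * (mmr+1) ≤ kk + 1 + mmr) (hm0 : 0 ≤ mmr) :
    (kk + 1 + qk) / kk ≤ 1 + ε/2 := by
  rw [div_le_iff₀ (by linarith : (0:ℝ) < kk)]
  have hkey : (qk + 1) * (mmr+1) ≤ (ε * kk / 2) * (mmr+1) := by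
    nlinarith [mul_nonneg (by linarith : (0:ℝ) ≤ ε*(mmr+1) - 8) (by linarith : (0:ℝ) ≤ kk),
      mul_nonneg (by linarith : (0:ℝ) ≤ ε*kk - 8) (by linarith : (0:ℝ) ≤ mmr+1)]
  have hkey2 : qk + 1 ≤ ε * kk / 2 := le_of_mul_le_mul_right hkey (by linarith)
  nlinarith

private lemma log_law_arith2 {ε qk kk mmr : ℝ} (hε : 0 < ε)
    (h8m : 8 ≤ ε * (mmr+1)) (h8k : 8 ≤ ε * kk) (hk1 : 1 ≤ kk)
    (hq : qk * (mmr+1) ≤ kk + mmr) (hm0 : 0 ≤ mmr) :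
    1 - ε/2 ≤ (kk - qk) / (kk+1) := by
  rw [le_div_iff₀ (by linarith : (0:ℝ) < kk+1)]
  have hkey : (qk + 1) * (mmr+1) ≤ (ε * kk / 2) * (mmr+1) := by
    nlinarith [mul_nonneg (by linarith : (0:ℝ) ≤ ε*(mmr+1) - 8) (by linarith : (0:ℝ) ≤ kk),
      mul_nonneg (by linarith : (0:ℝ) ≤ ε*kk - 8) (by linarith : (0:ℝ) ≤ mmr+1)]
  have hkey2 : qk + 1 ≤ ε * kk / 2 := le_of_mul_le_mul_right hkey (by linarith)
  nlinarith

set_option maxHeartbeats 1000000 in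
/-- (Logarithm law for the first hitting time; conditional form
of Theorem 4.7.) Let `(B_t)_{t ≥ 1}` be a family of shrinking targets in a
probability-preserving system, satisfying the exceptional-set bound
`m(𝒞^o_{N,B_t}) ≤ C (1 + |log m(B_t)|)/(N m(B_t))` for all `t ≥ 1`, `N ≥ 1`,
where `𝒞^o_{N,B} = {x : T^k x ∉ B for all 1 ≤ k ≤ N}`. Then for `m`-a.e. `x`
there is `t₀(x)` such that the first hitting time
`τ_{B_t}(x) = min{k ≥ 1 : T^k x ∈ B_t}` is finite for all `t ≥ t₀`
(the hitting set is nonempty), and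
`lim_{t→∞} log τ_{B_t}(x)/(−log m(B_t)) = 1`. -/
theorem logarithm_law_first_hitting_time
    {X : Type*} [MeasurableSpace X] (m : Measure X) [IsProbabilityMeasure m]
    (T : X → X) (hT : MeasurePreserving T m m)
    (B : ℝ → Set X)
    (hBmeas : ∀ t : ℝ, 1 ≤ t → MeasurableSet (B t))
    (hnested : ∀ s t : ℝ, 1 ≤ s → s ≤ t → B t ⊆ B s)
    (hBpos : ∀ t : ℝ, 1 ≤ t → 0 < m (B t))
    (hBto0 : Tendsto (fun t => m (B t)) atTop (nhds 0))
    (C : ℝ) (hC : 0 < C)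
    (hCo : ∀ t : ℝ, 1 ≤ t → ∀ N : ℕ, 1 ≤ N →
      (m {x | ∀ k : ℕ, 1 ≤ k → k ≤ N → T^[k] x ∉ B t}).toReal
        ≤ C * (1 + |Real.log (m (B t)).toReal|) / ((N : ℝ) * (m (B t)).toReal)) :
    ∀ᵐ x ∂m, ∃ t₀ : ℝ,
      (∀ t : ℝ, t₀ ≤ t → {k : ℕ | 1 ≤ k ∧ T^[k] x ∈ B t}.Nonempty) ∧
      Tendsto (fun t : ℝ =>
          Real.log ((sInf {k : ℕ | 1 ≤ k ∧ T^[k] x ∈ B t} : ℕ) : ℝ)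
            / (-Real.log (m (B t)).toReal))
        atTop (nhds 1) := by
  classical
  have hfin : ∀ t : ℝ, m (B t) ≠ ⊤ := fun t => measure_ne_top m _
  have hμnn : ∀ t : ℝ, 0 ≤ (m (B t)).toReal := fun t => ENNReal.toReal_nonneg
  have hμpos : ∀ t : ℝ, 1 ≤ t → 0 < (m (B t)).toReal :=
    fun t ht => ENNReal.toReal_pos (hBpos t ht).ne' (hfin t)
  have hμle1 : ∀ t : ℝ, (m (B t)).toReal ≤ 1 := by
    intro t
    calc (m (B t)).toReal ≤ (1 : ℝ≥0∞).toReal :=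
          ENNReal.toReal_mono (by simp) prob_le_one
      _ = 1 := by simp
  have hμto0 : Tendsto (fun t => (m (B t)).toReal) atTop (nhds 0) := by
    have h := (ENNReal.tendsto_toReal (a := 0) (by simp)).comp hBto0
    simpa [Function.comp_def] using h
  -- the families of sets
  set Co : ℕ → ℝ → Set X := fun N t => {x | ∀ k : ℕ, 1 ≤ k → k ≤ N → T^[k] x ∉ B t} with hCodef
  set Hit : ℕ → ℝ → Set X := fun N t => {x | ∃ k : ℕ, 1 ≤ k ∧ k ≤ N ∧ T^[k] x ∈ B t} with hHitdef
  have hCoMono : ∀ (N : ℕ) (s t : ℝ), 1 ≤ s → s ≤ t → Co N s ⊆ Co N t := by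
    intro N s t hs hst x hx k hk1 hkN hmem
    exact hx k hk1 hkN (hnested s t hs hst hmem)
  have hHitAnti : ∀ (N : ℕ) (s t : ℝ), 1 ≤ s → s ≤ t → Hit N t ⊆ Hit N s := by
    rintro N s t hs hst x ⟨k, h1, h2, h3⟩
    exact ⟨k, h1, h2, hnested s t hs hst h3⟩
  have hHitMeas : ∀ (N : ℕ) (t : ℝ), 1 ≤ t → m (Hit N t) ≤ (N : ℝ≥0∞) * m (B t) := by
    intro N t ht
    have hsub : Hit N t ⊆ ⋃ j ∈ Finset.Icc 1 N, T^[j] ⁻¹' (B t) := by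
      rintro x ⟨j, h1, h2, h3⟩
      exact mem_iUnion₂.2 ⟨j, Finset.mem_Icc.2 ⟨h1, h2⟩, h3⟩
    calc m (Hit N t) ≤ m (⋃ j ∈ Finset.Icc 1 N, T^[j] ⁻¹' (B t)) := measure_mono hsub
      _ ≤ ∑ j ∈ Finset.Icc 1 N, m (T^[j] ⁻¹' (B t)) := measure_biUnion_finset_le _ _
      _ = ∑ j ∈ Finset.Icc 1 N, m (B t) := Finset.sum_congr rfl fun j _ =>
            (hT.iterate j).measure_preimage (hBmeas t ht).nullMeasurableSet
      _ = (N : ℝ≥0∞) * m (B t) := by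
          simp [Finset.sum_const, Nat.card_Icc, nsmul_eq_mul]
  have hCoMeas : ∀ t : ℝ, 1 ≤ t → ∀ N : ℕ, 1 ≤ N → m (Co N t) ≤
      ENNReal.ofReal (C * (1 + |Real.log (m (B t)).toReal|) / ((N : ℝ) * (m (B t)).toReal)) := by
    intro t ht N hN
    have h := hCo t ht N hN
    rw [← ENNReal.ofReal_toReal (measure_ne_top m (Co N t))]
    exact ENNReal.ofReal_le_ofReal h
  -- the value-intervals
  set I : ℕ → Set ℝ := fun k =>
    {t : ℝ | 1 ≤ t ∧ (1/2 : ℝ)^(k+1) < (m (B t)).toReal ∧ (m (B t)).toReal ≤ (1/2 : ℝ)^k}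
    with hIdef
  have hIbddA : ∀ k : ℕ, BddAbove (I k) := by
    intro k
    have h := hμto0.eventually_lt_const (pow_pos one_half_pos (k+1))
    rcases eventually_atTop.1 h with ⟨Tk, hTk⟩
    refine ⟨Tk, fun t htI => ?_⟩
    by_contra hlt
    push_neg at hlt
    exact absurd (hTk t hlt.le) (not_lt.2 htI.2.1.le)
  have hIbddB : ∀ k : ℕ, BddBelow (I k) := fun k => ⟨1, fun t ht => ht.1⟩
  have hmemI : ∀ t : ℝ, 1 ≤ t → ∃ k : ℕ, t ∈ I k := by
    intro t ht
    have hex : ∃ n : ℕ, (1/2:ℝ)^n < (m (B t)).toReal :=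
      exists_pow_lt_of_lt_one (hμpos t ht) (by norm_num)
    have hn1 : 1 ≤ Nat.find hex := by
      rcases Nat.eq_zero_or_pos (Nat.find hex) with h0 | h1
      · exfalso
        have hsp := Nat.find_spec hex
        rw [h0] at hsp
        simp only [pow_zero] at hsp
        linarith [hμle1 t]
      · exact h1
    refine ⟨Nat.find hex - 1, ht, ?_, ?_⟩
    · rw [Nat.sub_add_cancel hn1]; exact Nat.find_spec hex
    · have hmin := Nat.find_min hex (show Nat.find hex - 1 < Nat.find hex by omega)
      push_neg at hmin
      exact hmin
  -- integer quantities
  set q : ℕ → ℕ → ℕ := fun mm k => (k + 1 + mm) / (mm + 1) with hqdef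
  set q' : ℕ → ℕ → ℕ := fun mm k => (k + mm) / (mm + 1) with hq'def
  have hq'le : ∀ mm k : ℕ, q' mm k ≤ k := by
    intro mm k
    calc (k + mm) / (mm + 1) ≤ ((mm+1) * k + mm) / (mm + 1) := by
          refine Nat.div_le_div_right ?_
          rw [Nat.succ_mul]
          linarith [Nat.zero_le (mm * k)]
      _ = k := by
          rw [Nat.mul_add_div (Nat.succ_pos mm), Nat.div_eq_of_lt (Nat.lt_succ_self mm)]
          omega
  have hq'geR : ∀ mm k : ℕ, (k : ℝ) ≤ (q' mm k : ℝ) * (mm + 1) := by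
    intro mm k
    have h1 := Nat.div_add_mod (k + mm) (mm + 1)
    have h2 : (k + mm) % (mm + 1) < mm + 1 := Nat.mod_lt _ (Nat.succ_pos mm)
    have h3 : k ≤ (mm + 1) * ((k + mm) / (mm + 1)) := by
      set d := (k + mm) / (mm + 1)
      set r := (k + mm) % (mm + 1)
      have : (mm+1) * d + mm ≥ k + mm := by
        calc (mm+1) * d + mm ≥ (mm+1) * d + r := by omega
          _ = k + mm := h1
      omega
    calc (k : ℝ) ≤ ((mm + 1) * ((k + mm) / (mm + 1)) : ℕ) := by exact_mod_cast h3
      _ = (q' mm k : ℝ) * (mm + 1) := by push_cast [hq'def]; ring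
  have hqleR : ∀ mm k : ℕ, (q mm k : ℝ) * (mm + 1) ≤ (k : ℝ) + 1 + mm := by
    intro mm k
    have h := Nat.div_mul_le_self (k + 1 + mm) (mm + 1)
    calc (q mm k : ℝ) * (mm + 1) = (((k + 1 + mm) / (mm + 1)) * (mm + 1) : ℕ) := by
          push_cast [hqdef]; ring
      _ ≤ ((k + 1 + mm : ℕ) : ℝ) := by exact_mod_cast h
      _ = (k : ℝ) + 1 + mm := by push_cast; ring
  have hq'leR : ∀ mm k : ℕ, (q' mm k : ℝ) * (mm + 1) ≤ (k : ℝ) + mm := by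
    intro mm k
    have h := Nat.div_mul_le_self (k + mm) (mm + 1)
    calc (q' mm k : ℝ) * (mm + 1) = (((k + mm) / (mm + 1)) * (mm + 1) : ℕ) := by
          push_cast [hq'def]; ring
      _ ≤ ((k + mm : ℕ) : ℝ) := by exact_mod_cast h
      _ = (k : ℝ) + mm := by push_cast; ring
  have hq'leq : ∀ mm k : ℕ, q' mm k ≤ q mm k := by
    intro mm k
    exact Nat.div_le_div_right (by omega)
  set Nbig : ℕ → ℕ → ℕ := fun mm k => 2 ^ (k + 1 + q mm k) with hNbigdef
  set Nsm : ℕ → ℕ → ℕ := fun mm k => 2 ^ (k - q' mm k) with hNsmdef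
  set L2 : ℝ := Real.log 2 with hL2def
  have hL2pos : 0 < L2 := Real.log_pos (by norm_num)
  -- bad sets and their measures
  set G : ℕ → ℕ → Set X := fun mm k =>
    (⋃ t ∈ I k, Co (Nbig mm k) t) ∪ (⋃ t ∈ I k, Hit (Nsm mm k) t) with hGdef
  set c : ℕ → ℕ → ℝ := fun mm k =>
    C * (1 + ((k:ℝ)+1) * L2) * (1/2:ℝ)^(q mm k) + (1/2:ℝ)^(q' mm k) with hcdef
  have hcnn : ∀ mm k : ℕ, 0 ≤ c mm k := by
    intro mm k
    have h1 : (0:ℝ) ≤ C * (1 + (k+1) * L2) * (1/2:ℝ)^(q mm k) := by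
      have : (0:ℝ) ≤ 1 + (k+1) * L2 := by positivity
      positivity
    have h2 : (0:ℝ) ≤ (1/2:ℝ)^(q' mm k) := by positivity
    simp only [hcdef]
    linarith
  have hGmeas : ∀ mm k : ℕ, m (G mm k) ≤ ENNReal.ofReal (c mm k) := by
    intro mm k
    have h1 : m (⋃ t ∈ I k, Co (Nbig mm k) t) ≤
        ENNReal.ofReal (C * (1 + ((k:ℝ)+1) * L2) * (1/2:ℝ)^(q mm k)) := by
      apply measure_biUnion_le_mono' m (hIbddA k)
      · intro s hs t ht hst
        exact hCoMono _ s t hs.1 hst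
      · intro t htI
        have ht1 : 1 ≤ t := htI.1
        have hN1 : 1 ≤ Nbig mm k := Nat.one_le_two_pow
        refine le_trans (hCoMeas t ht1 _ hN1) (ENNReal.ofReal_le_ofReal ?_)
        have hμp := hμpos t ht1
        have hlogle : |Real.log (m (B t)).toReal| ≤ ((k:ℝ)+1) * L2 := by
          rw [abs_of_nonpos (Real.log_nonpos (hμnn t) (hμle1 t))]
          have hlt : Real.log ((1/2:ℝ)^(k+1)) ≤ Real.log (m (B t)).toReal :=
            Real.log_le_log (by positivity) htI.2.1.le
          rw [Real.log_pow] at hlt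
          have hhalf : Real.log (1/2 : ℝ) = -L2 := by
            rw [one_div, Real.log_inv, hL2def]
          rw [hhalf] at hlt
          push_cast at hlt ⊢
          linarith
        have hNcast : (Nbig mm k : ℝ) = 2^(k+1) * 2^(q mm k) := by
          simp only [hNbigdef]
          push_cast
          rw [← pow_add]
        have hμlb : ((2:ℝ)^(k+1))⁻¹ ≤ (m (B t)).toReal := by
          have h := htI.2.1
          rw [one_div, inv_pow] at h
          linarith
        have hden : (2:ℝ)^(q mm k) ≤ (Nbig mm k : ℝ) * (m (B t)).toReal := by
          have h1' : (2:ℝ)^(q mm k) = 2^(k+1) * 2^(q mm k) * ((2:ℝ)^(k+1))⁻¹ := by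
            field_simp
          rw [h1', hNcast]
          exact mul_le_mul_of_nonneg_left hμlb (by positivity)
        calc C * (1 + |Real.log (m (B t)).toReal|) / ((Nbig mm k : ℝ) * (m (B t)).toReal)
            ≤ C * (1 + ((k:ℝ)+1) * L2) / (2:ℝ)^(q mm k) := by
              apply div_le_div₀
              · have : (0:ℝ) ≤ 1 + ((k:ℝ)+1) * L2 := by positivity
                positivity
              · have := abs_nonneg (Real.log (m (B t)).toReal)
                nlinarith [hC]
              · positivity
              · exact hden
          _ = C * (1 + ((k:ℝ)+1) * L2) * (1/2:ℝ)^(q mm k) := by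
              rw [div_eq_mul_inv, one_div, inv_pow]
    have h2 : m (⋃ t ∈ I k, Hit (Nsm mm k) t) ≤ ENNReal.ofReal ((1/2:ℝ)^(q' mm k)) := by
      apply measure_biUnion_le_anti' m (hIbddB k)
      · intro s hs t ht hst
        exact hHitAnti _ s t hs.1 hst
      · intro t htI
        have ht1 : 1 ≤ t := htI.1
        have hstep : (Nsm mm k : ℝ) * (m (B t)).toReal ≤ (1/2:ℝ)^(q' mm k) := by
          have hμub : (m (B t)).toReal ≤ ((2:ℝ)^k)⁻¹ := by
            have h := htI.2.2
            rwa [one_div, inv_pow] at h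
          have hNcast : (Nsm mm k : ℝ) = 2^(k - q' mm k) := by
            simp only [hNsmdef]; push_cast; ring
          have hsplit : (2:ℝ)^(k - q' mm k) * ((2:ℝ)^k)⁻¹ = ((2:ℝ)^(q' mm k))⁻¹ := by
            rw [pow_sub₀ (2:ℝ) (by norm_num) (hq'le mm k)]
            field_simp
          calc (Nsm mm k : ℝ) * (m (B t)).toReal
              ≤ (2:ℝ)^(k - q' mm k) * ((2:ℝ)^k)⁻¹ := by
                rw [hNcast]
                exact mul_le_mul_of_nonneg_left hμub (by positivity)
            _ = ((2:ℝ)^(q' mm k))⁻¹ := hsplit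
            _ = (1/2:ℝ)^(q' mm k) := by rw [one_div, inv_pow]
        calc m (Hit (Nsm mm k) t) ≤ (Nsm mm k : ℝ≥0∞) * m (B t) := hHitMeas _ t ht1
          _ = ENNReal.ofReal ((Nsm mm k : ℝ) * (m (B t)).toReal) := by
              rw [ENNReal.ofReal_mul (by positivity), ENNReal.ofReal_natCast,
                ENNReal.ofReal_toReal (hfin t)]
          _ ≤ ENNReal.ofReal ((1/2:ℝ)^(q' mm k)) := ENNReal.ofReal_le_ofReal hstep
    calc m (G mm k) ≤ m (⋃ t ∈ I k, Co (Nbig mm k) t) + m (⋃ t ∈ I k, Hit (Nsm mm k) t) :=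
          measure_union_le _ _
      _ ≤ ENNReal.ofReal (C * (1 + ((k:ℝ)+1) * L2) * (1/2:ℝ)^(q mm k)) +
          ENNReal.ofReal ((1/2:ℝ)^(q' mm k)) := add_le_add h1 h2
      _ = ENNReal.ofReal (c mm k) := by
          have hA : (0:ℝ) ≤ C * (1 + ((k:ℝ)+1) * L2) * (1/2:ℝ)^(q mm k) := by
            have h0 : (0:ℝ) ≤ 1 + ((k:ℝ)+1) * L2 := by positivity
            positivity
          have hB : (0:ℝ) ≤ (1/2:ℝ)^(q' mm k) := by positivity
          exact (ENNReal.ofReal_add hA hB).symm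
  -- summability
  have hcsum : ∀ mm : ℕ, Summable (fun k => c mm k) := by
    intro mm
    set r : ℝ := (1/2:ℝ) ^ (((mm:ℝ) + 1))⁻¹ with hrdef
    have hr0 : 0 < r := Real.rpow_pos_of_pos (by norm_num) _
    have hr1 : r < 1 := Real.rpow_lt_one (by norm_num) (by norm_num) (by positivity)
    have hhalf_le : ∀ k : ℕ, (1/2:ℝ)^(q' mm k) ≤ r ^ k := by
      intro k
      have hexp : (k:ℝ) / ((mm:ℝ)+1) ≤ (q' mm k : ℝ) := by
        rw [div_le_iff₀ (by positivity)]
        have := hq'geR mm k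
        push_cast at this ⊢
        linarith
      calc (1/2:ℝ)^(q' mm k) = (1/2:ℝ) ^ ((q' mm k : ℝ)) := by
            rw [Real.rpow_natCast]
        _ ≤ (1/2:ℝ) ^ ((k:ℝ) / ((mm:ℝ)+1)) :=
            Real.rpow_le_rpow_of_exponent_ge (by norm_num) (by norm_num) hexp
        _ = r ^ k := by
            rw [hrdef, ← Real.rpow_natCast ((1/2:ℝ) ^ (((mm:ℝ) + 1))⁻¹) k,
              ← Real.rpow_mul (by norm_num)]
            congr 1
            field_simp
    have hbound : ∀ k : ℕ, c mm k ≤ (C * (1 + L2) + 1) * r ^ k + (C * L2) * ((k:ℝ) * r ^ k) := by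
      intro k
      have hql : (1/2:ℝ)^(q mm k) ≤ (1/2:ℝ)^(q' mm k) :=
        pow_le_pow_of_le_one (by norm_num) (by norm_num) (hq'leq mm k)
      have h1 : c mm k ≤ (C * (1 + ((k:ℝ)+1) * L2) + 1) * (1/2:ℝ)^(q' mm k) := by
        simp only [hcdef]
        have hnn : (0:ℝ) ≤ C * (1 + ((k:ℝ)+1) * L2) := by
          have : (0:ℝ) ≤ 1 + ((k:ℝ)+1) * L2 := by positivity
          positivity
        push_cast
        nlinarith [mul_le_mul_of_nonneg_left hql hnn]
      have h2 : (C * (1 + ((k:ℝ)+1) * L2) + 1) * (1/2:ℝ)^(q' mm k) ≤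
          (C * (1 + ((k:ℝ)+1) * L2) + 1) * r ^ k := by
        apply mul_le_mul_of_nonneg_left (hhalf_le k)
        have : (0:ℝ) ≤ 1 + ((k:ℝ)+1) * L2 := by positivity
        positivity
      have h3 : (C * (1 + ((k:ℝ)+1) * L2) + 1) * r ^ k =
          (C * (1 + L2) + 1) * r ^ k + (C * L2) * ((k:ℝ) * r ^ k) := by ring
      exact h1.trans (h2.trans_eq h3)
    have hs1 : Summable (fun k : ℕ => r ^ k) := summable_geometric_of_lt_one hr0.le hr1
    have hs2 : Summable (fun k : ℕ => (k:ℝ) * r ^ k) := by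
      have := summable_pow_mul_geometric_of_norm_lt_one 1
        (r := r) (by rw [Real.norm_eq_abs, abs_of_pos hr0]; exact hr1)
      simpa using this
    exact Summable.of_nonneg_of_le (hcnn mm) hbound ((hs1.mul_left _).add (hs2.mul_left _))
  have htsum : ∀ mm : ℕ, (∑' k, m (G mm k)) ≠ ⊤ := by
    intro mm
    have h1 : (∑' k, m (G mm k)) ≤ ∑' k, ENNReal.ofReal (c mm k) :=
      ENNReal.tsum_le_tsum (fun k => hGmeas mm k)
    have h2 : ∑' k, ENNReal.ofReal (c mm k) = ENNReal.ofReal (∑' k, c mm k) :=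
      (ENNReal.ofReal_tsum_of_nonneg (hcnn mm) (hcsum mm)).symm
    rw [h2] at h1
    exact ne_top_of_le_ne_top ENNReal.ofReal_ne_top h1
  have hae : ∀ᵐ x ∂m, ∀ mm : ℕ, ∀ᶠ k in atTop, x ∉ G mm k :=
    ae_all_iff.2 fun mm => ae_eventually_notMem (htsum mm)
  -- pointwise conclusion
  filter_upwards [hae] with x hx
  have hControl : ∀ mm : ℕ, ∃ K : ℕ, ∀ k : ℕ, K ≤ k → ∀ t ∈ I k,
      {j : ℕ | 1 ≤ j ∧ T^[j] x ∈ B t}.Nonempty ∧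
      sInf {j : ℕ | 1 ≤ j ∧ T^[j] x ∈ B t} ≤ Nbig mm k ∧
      Nsm mm k < sInf {j : ℕ | 1 ≤ j ∧ T^[j] x ∈ B t} := by
    intro mm
    rcases eventually_atTop.1 (hx mm) with ⟨K, hK⟩
    refine ⟨K, fun k hk t htI => ?_⟩
    have hxG := hK k hk
    have hxCo : x ∉ Co (Nbig mm k) t := fun hmem =>
      hxG (Or.inl (mem_iUnion₂.2 ⟨t, htI, hmem⟩))
    have hxHit : x ∉ Hit (Nsm mm k) t := fun hmem =>
      hxG (Or.inr (mem_iUnion₂.2 ⟨t, htI, hmem⟩))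
    have hex : ∃ j : ℕ, 1 ≤ j ∧ j ≤ Nbig mm k ∧ T^[j] x ∈ B t := by
      by_contra hcon
      push_neg at hcon
      exact hxCo (fun j hj1 hj2 hmem => hcon j hj1 hj2 hmem)
    obtain ⟨j, hj1, hj2, hj3⟩ := hex
    have hne : {j : ℕ | 1 ≤ j ∧ T^[j] x ∈ B t}.Nonempty := ⟨j, hj1, hj3⟩
    have hτle : sInf {j : ℕ | 1 ≤ j ∧ T^[j] x ∈ B t} ≤ Nbig mm k :=
      le_trans (Nat.sInf_le ⟨hj1, hj3⟩) hj2
    have hτmem := Nat.sInf_mem hne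
    have hτgt : Nsm mm k < sInf {j : ℕ | 1 ≤ j ∧ T^[j] x ∈ B t} := by
      by_contra hle
      push_neg at hle
      exact hxHit ⟨sInf {j : ℕ | 1 ≤ j ∧ T^[j] x ∈ B t}, hτmem.1, hle, hτmem.2⟩
    exact ⟨hne, hτle, hτgt⟩
  have hsmall : ∀ K : ℕ, ∃ Tr : ℝ, 1 ≤ Tr ∧ ∀ t : ℝ, Tr ≤ t →
      (m (B t)).toReal < (1/2:ℝ)^(K+1) := by
    intro K
    have h := hμto0.eventually_lt_const (pow_pos one_half_pos (K+1))
    rcases eventually_atTop.1 h with ⟨Tr, hTr⟩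
    exact ⟨max Tr 1, le_max_right _ _, fun t ht => hTr t (le_trans (le_max_left _ _) ht)⟩
  have hkbig : ∀ (K : ℕ) (t : ℝ) (k : ℕ), t ∈ I k →
      (m (B t)).toReal < (1/2:ℝ)^(K+1) → K < k := by
    intro K t k htI hlt
    by_contra h
    push_neg at h
    have h1 : (1/2:ℝ)^(k+1) < (1/2:ℝ)^(K+1) := lt_trans htI.2.1 hlt
    have h2 : (1/2:ℝ)^(K+1) ≤ (1/2:ℝ)^(k+1) :=
      pow_le_pow_of_le_one (by norm_num) (by norm_num) (by omega)
    linarith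
  obtain ⟨K₀, hK₀⟩ := hControl 0
  obtain ⟨T₀, hT₀1, hT₀⟩ := hsmall K₀
  refine ⟨T₀, ?_, ?_⟩
  · intro t ht
    have ht1 : 1 ≤ t := le_trans hT₀1 ht
    obtain ⟨k, hk⟩ := hmemI t ht1
    exact (hK₀ k (hkbig K₀ t k hk (hT₀ t ht)).le t hk).1
  · rw [Metric.tendsto_atTop]
    intro ε hε
    obtain ⟨mm, hmm⟩ := exists_nat_ge (8/ε)
    have hmm1 : 8 ≤ ε * ((mm:ℝ)+1) := by
      rw [div_le_iff₀ hε] at hmm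
      nlinarith
    obtain ⟨K, hK⟩ := hControl mm
    obtain ⟨k₁, hk₁⟩ := exists_nat_ge (8/ε)
    set k₀ : ℕ := max (max K 1) k₁ with hk₀def
    obtain ⟨Tr, hTr1, hTr⟩ := hsmall k₀
    refine ⟨Tr, fun t ht => ?_⟩
    have ht1 : 1 ≤ t := le_trans hTr1 ht
    obtain ⟨k, hkI⟩ := hmemI t ht1
    have hk0 : k₀ < k := hkbig k₀ t k hkI (hTr t ht)
    have hkK : K ≤ k := le_trans (le_trans (le_max_left _ _) (le_max_left _ _)) hk0.le
    have hk1 : 1 ≤ k := le_trans (le_trans (le_max_right _ _) (le_max_left _ _)) hk0.le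
    have hkk₁ : k₁ ≤ k := le_trans (le_max_right _ _) hk0.le
    have h8k : 8 ≤ ε * k := by
      rw [div_le_iff₀ hε] at hk₁
      have : (k₁ : ℝ) ≤ k := by exact_mod_cast hkk₁
      nlinarith
    obtain ⟨hne, hub, hlb⟩ := hK k hkK t hkI
    set τ : ℕ := sInf {j : ℕ | 1 ≤ j ∧ T^[j] x ∈ B t} with hτdef
    have hτ1 : 1 ≤ τ := (Nat.sInf_mem hne).1
    have hτubR : (τ : ℝ) ≤ 2 ^ (k + 1 + q mm k) := by
      have h : τ ≤ 2 ^ (k + 1 + q mm k) := hub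
      exact_mod_cast h
    have hτlbR : (2:ℝ) ^ (k - q' mm k) ≤ (τ : ℝ) := by
      have h : 2 ^ (k - q' mm k) ≤ τ := le_of_lt hlb
      exact_mod_cast h
    have hτposR : (0:ℝ) < (τ:ℝ) := by exact_mod_cast hτ1
    have hlog2 : (0:ℝ) < Real.log 2 := Real.log_pos (by norm_num)
    have hkR : (1:ℝ) ≤ (k:ℝ) := by exact_mod_cast hk1
    have hLub : Real.log (τ:ℝ) ≤ ((k:ℝ) + 1 + (q mm k : ℝ)) * Real.log 2 := by
      have h := Real.log_le_log hτposR hτubR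
      rw [Real.log_pow] at h
      push_cast at h
      linarith
    have hLlb : ((k:ℝ) - (q' mm k : ℝ)) * Real.log 2 ≤ Real.log (τ:ℝ) := by
      have h := Real.log_le_log (by positivity : (0:ℝ) < (2:ℝ) ^ (k - q' mm k)) hτlbR
      rw [Real.log_pow] at h
      have hc : ((k - q' mm k : ℕ) : ℝ) = (k:ℝ) - (q' mm k : ℝ) := by
        rw [Nat.cast_sub (hq'le mm k)]
      rw [hc] at h
      exact h
    have hL0 : 0 ≤ Real.log (τ:ℝ) := Real.log_nonneg (by exact_mod_cast hτ1)
    have hhalf : Real.log (1/2:ℝ) = -Real.log 2 := by rw [one_div, Real.log_inv]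
    have hDlb : (k:ℝ) * Real.log 2 ≤ -Real.log (m (B t)).toReal := by
      have h := Real.log_le_log (hμpos t ht1) hkI.2.2
      rw [Real.log_pow, hhalf] at h
      push_cast at h
      linarith
    have hDub : -Real.log (m (B t)).toReal ≤ ((k:ℝ)+1) * Real.log 2 := by
      have h := Real.log_le_log (by positivity : (0:ℝ) < (1/2:ℝ)^(k+1)) hkI.2.1.le
      rw [Real.log_pow, hhalf] at h
      push_cast at h
      linarith
    have hDpos : 0 < -Real.log (m (B t)).toReal :=
      lt_of_lt_of_le (mul_pos (lt_of_lt_of_le one_pos hkR) hlog2) hDlb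
    have hub2 : Real.log (τ:ℝ) / (-Real.log (m (B t)).toReal) ≤
        (((k:ℝ) + 1 + (q mm k : ℝ)) * Real.log 2) / ((k:ℝ) * Real.log 2) := by
      apply div_le_div₀ (mul_nonneg (by positivity) hlog2.le) hLub
        (mul_pos (by linarith) hlog2) hDlb
    have hub3 : (((k:ℝ) + 1 + (q mm k : ℝ)) * Real.log 2) / ((k:ℝ) * Real.log 2)
        = ((k:ℝ) + 1 + (q mm k : ℝ)) / (k:ℝ) :=
      mul_div_mul_right _ _ (ne_of_gt hlog2)
    have harith1 : ((k:ℝ) + 1 + (q mm k : ℝ)) / (k:ℝ) ≤ 1 + ε/2 :=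
      log_law_arith1 hε hmm1 h8k hkR (hqleR mm k) (Nat.cast_nonneg mm)
    have hlb2 : (((k:ℝ) - (q' mm k : ℝ)) * Real.log 2) / (((k:ℝ)+1) * Real.log 2) ≤
        Real.log (τ:ℝ) / (-Real.log (m (B t)).toReal) :=
      div_le_div₀ hL0 hLlb hDpos hDub
    have hlb3 : (((k:ℝ) - (q' mm k : ℝ)) * Real.log 2) / (((k:ℝ)+1) * Real.log 2)
        = ((k:ℝ) - (q' mm k : ℝ)) / ((k:ℝ)+1) :=
      mul_div_mul_right _ _ (ne_of_gt hlog2)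
    have harith2 : 1 - ε/2 ≤ ((k:ℝ) - (q' mm k : ℝ)) / ((k:ℝ)+1) :=
      log_law_arith2 hε hmm1 h8k hkR (hq'leR mm k) (Nat.cast_nonneg mm)
    have hup : Real.log (τ:ℝ) / (-Real.log (m (B t)).toReal) ≤ 1 + ε/2 :=
      hub2.trans (hub3.le.trans harith1)
    have hlo : 1 - ε/2 ≤ Real.log (τ:ℝ) / (-Real.log (m (B t)).toReal) :=
      (harith2.trans hlb3.ge).trans hlb2
    rw [Real.dist_eq]
    exact abs_lt.2 ⟨by linarith, by linarith⟩
end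

section
/- (Thickening lemma: comparison of continuous and discrete first hitting times.) Let X be a set and (φ_t)_{t∈ℝ} a flow on X (φ_0 = id, φ_{s+t} = φ_s ∘ φ_t). Let B ⊆ X and let B̃ = ⋃_{s ∈ [−1/2,1/2]} φ_s(B) be its thickening along the flow. For x ∈ X set τ_B(x) = inf{t ∈ ℝ : t ≥ 1/2 and φ_t x ∈ B} and τ^d_{B̃}(x) = inf{k ∈ ℤ : k ≥ 1 and φ_k x ∈ B̃}, with inf ∅ = +∞. Then τ_B(x) < ∞ if and only if τ^d_{B̃}(x) < ∞, and in that case |τ_B(x) − τ^d_{B̃}(x)| ≤ 1/2. -/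
open Set

/-- (Thickening lemma: comparison of continuous and discrete
first hitting times.) Let `(φ_t)` be a flow on a set `X`, `B ⊆ X`, and let
`B̃ = ⋃_{|s| ≤ 1/2} φ_s(B)` be the thickening of `B` along the flow. Set
`τ_B(x) = inf{t ≥ 1/2 : φ_t x ∈ B}` and `τ^d_{B̃}(x) = inf{k ∈ ℤ, k ≥ 1 : φ_k x ∈ B̃}`
(with `inf ∅ = +∞`). Then `τ_B(x) < ∞` iff `τ^d_{B̃}(x) < ∞` (the corresponding
hitting sets are simultaneously nonempty), and in that case
`|τ_B(x) − τ^d_{B̃}(x)| ≤ 1/2`. -/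
theorem thickening_first_hitting_time_comparison
    {X : Type*} (φ : ℝ → X → X)
    (hφ0 : φ 0 = id)
    (hφadd : ∀ s t : ℝ, φ (s + t) = φ s ∘ φ t)
    (B : Set X) (x : X) :
    ((∃ t : ℝ, 1 / 2 ≤ t ∧ φ t x ∈ B) ↔
        (∃ k : ℤ, 1 ≤ k ∧ φ (k : ℝ) x ∈ ⋃ s ∈ Icc (-(1:ℝ)/2) (1/2), φ s '' B)) ∧
    ((∃ t : ℝ, 1 / 2 ≤ t ∧ φ t x ∈ B) →
      |sInf {t : ℝ | 1 / 2 ≤ t ∧ φ t x ∈ B}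
          - ((sInf {k : ℤ | 1 ≤ k ∧ φ (k : ℝ) x ∈ ⋃ s ∈ Icc (-(1:ℝ)/2) (1/2), φ s '' B} : ℤ) : ℝ)|
        ≤ 1 / 2) := by
  -- membership in the thickening, characterized
  have key : ∀ y : ℝ, φ y x ∈ (⋃ s ∈ Icc (-(1:ℝ)/2) (1/2), φ s '' B) ↔
      ∃ s : ℝ, |s| ≤ 1/2 ∧ φ (y - s) x ∈ B := by
    intro y
    simp only [mem_iUnion, mem_image, mem_Icc]
    constructor
    · rintro ⟨s, ⟨hs1, hs2⟩, b, hb, hsb⟩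
      refine ⟨s, abs_le.2 ⟨by linarith, hs2⟩, ?_⟩
      have h1 : φ (y - s) x = φ (-s) (φ y x) := by
        rw [← Function.comp_apply (f := φ (-s)), ← hφadd]
        congr 1; ring
      have h2 : φ (-s) (φ s b) = b := by
        rw [← Function.comp_apply (f := φ (-s)), ← hφadd]
        simp [hφ0]
      rw [h1, ← hsb, h2]; exact hb
    · rintro ⟨s, hs, hmem⟩
      rw [abs_le] at hs
      refine ⟨s, ⟨by linarith [hs.1], hs.2⟩, φ (y - s) x, hmem, ?_⟩
      rw [← Function.comp_apply (f := φ s), ← hφadd]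
      congr 1; ring
  -- forward direction: t ∈ S gives round(t) ∈ K
  have fwd : ∀ t : ℝ, 1/2 ≤ t → φ t x ∈ B →
      (1 ≤ ⌊t + 1/2⌋ ∧ φ ((⌊t + 1/2⌋ : ℤ) : ℝ) x ∈ (⋃ s ∈ Icc (-(1:ℝ)/2) (1/2), φ s '' B)
        ∧ ((⌊t + 1/2⌋ : ℤ) : ℝ) ≤ t + 1/2) := by
    intro t ht hB
    have hk1 : (1 : ℤ) ≤ ⌊t + 1/2⌋ := by
      rw [Int.le_floor]; push_cast; linarith
    have hle : ((⌊t + 1/2⌋ : ℤ) : ℝ) ≤ t + 1/2 := Int.floor_le _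
    have hgt : t + 1/2 - 1 < ((⌊t + 1/2⌋ : ℤ) : ℝ) := Int.sub_one_lt_floor _
    refine ⟨hk1, ?_, hle⟩
    rw [key]
    refine ⟨((⌊t + 1/2⌋ : ℤ) : ℝ) - t, abs_le.2 ⟨by linarith, by linarith⟩, ?_⟩
    have : ((⌊t + 1/2⌋ : ℤ) : ℝ) - (((⌊t + 1/2⌋ : ℤ) : ℝ) - t) = t := by ring
    rw [this]; exact hB
  -- backward: k ∈ K gives a t ∈ S with |t - k| ≤ 1/2
  have bwd : ∀ k : ℤ, 1 ≤ k → φ ((k : ℤ) : ℝ) x ∈ (⋃ s ∈ Icc (-(1:ℝ)/2) (1/2), φ s '' B) →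
      ∃ t : ℝ, (1/2 ≤ t ∧ φ t x ∈ B) ∧ (k : ℝ) - 1/2 ≤ t ∧ t ≤ (k : ℝ) + 1/2 := by
    intro k hk hmem
    rw [key] at hmem
    obtain ⟨s, hs, hB⟩ := hmem
    rw [abs_le] at hs
    have hk' : (1 : ℝ) ≤ (k : ℝ) := by exact_mod_cast hk
    exact ⟨(k : ℝ) - s, ⟨by linarith [hs.2], hB⟩, by linarith [hs.2], by linarith [hs.1]⟩
  constructor
  · constructor
    · rintro ⟨t, ht, hB⟩
      obtain ⟨h1, h2, _⟩ := fwd t ht hB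
      exact ⟨⌊t + 1/2⌋, h1, h2⟩
    · rintro ⟨k, hk, hmem⟩
      obtain ⟨t, ht, _⟩ := bwd k hk hmem
      exact ⟨t, ht⟩
  · rintro ⟨t, ht, hB⟩
    set S : Set ℝ := {t : ℝ | 1 / 2 ≤ t ∧ φ t x ∈ B} with hSdef
    set K : Set ℤ := {k : ℤ | 1 ≤ k ∧ φ (k : ℝ) x ∈ ⋃ s ∈ Icc (-(1:ℝ)/2) (1/2), φ s '' B} with hKdef
    have hSne : S.Nonempty := ⟨t, ht, hB⟩
    have hSbdd : BddBelow S := ⟨1/2, fun u hu => hu.1⟩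
    have hKne : K.Nonempty := by
      obtain ⟨h1, h2, _⟩ := fwd t ht hB
      exact ⟨⌊t + 1/2⌋, h1, h2⟩
    have hKbdd : BddBelow K := ⟨1, fun k hk => hk.1⟩
    have hKmem : sInf K ∈ K := Int.csInf_mem hKne hKbdd
    -- τ ≤ τd + 1/2
    obtain ⟨t0, ht0, ht0l, ht0r⟩ := bwd (sInf K) hKmem.1 hKmem.2
    have h1 : sInf S ≤ t0 := csInf_le hSbdd ht0
    -- τd ≤ τ + 1/2
    have h2 : ((sInf K : ℤ) : ℝ) - 1/2 ≤ sInf S := by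
      apply le_csInf hSne
      intro u hu
      obtain ⟨hk1, hk2, hk3⟩ := fwd u hu.1 hu.2
      have : sInf K ≤ ⌊u + 1/2⌋ := csInf_le hKbdd ⟨hk1, hk2⟩
      have : ((sInf K : ℤ) : ℝ) ≤ ((⌊u + 1/2⌋ : ℤ) : ℝ) := by exact_mod_cast this
      linarith
    rw [abs_le]
    constructor <;> linarith
end
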